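/- arXiv:2601.11067 — 7 statements merged into one kernel-verified Lean document; each statement's English description precedes it below -/
import Mathlib

section
/- Let n be a positive integer divisible by 4, and let a, b, ℓ, a0, b0, ℓ0 be integers such that, modulo n: b = 4*b0, a = 4*a0 + 1, ℓ = 4*ℓ0 + 3, b*b0 ≡ 4, b*a0 ≡ 1 − a, and ℓ + 2 ≡ b*ℓ0 + a. Then b ≡ −4 (mod n) and a ≡ 2ℓ − 1 (mod n). -/
/-- If, modulo `n` (with `4 ∣ n`, `n > 0`): `b ≡ 4*b0`, `a ≡ 4*a0 + 1`,
`ℓ ≡ 4*ℓ0 + 3`, `b*b0 ≡ 4`, `b*a0 ≡ 1 - a` and `ℓ + 2 ≡ b*ℓ0 + a`, then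
`b ≡ -4` and `a ≡ 2*ℓ - 1` modulo `n`. -/
theorem stmt1 (n : ℕ) (hn : 0 < n) (h4 : (4 : ℕ) ∣ n) (a b ℓ a0 b0 ℓ0 : ℤ)
    (hb : b ≡ 4 * b0 [ZMOD (n : ℤ)]) (ha : a ≡ 4 * a0 + 1 [ZMOD (n : ℤ)])
    (hl : ℓ ≡ 4 * ℓ0 + 3 [ZMOD (n : ℤ)]) (hbb0 : b * b0 ≡ 4 [ZMOD (n : ℤ)])
    (hba0 : b * a0 ≡ 1 - a [ZMOD (n : ℤ)]) (hl2 : ℓ + 2 ≡ b * ℓ0 + a [ZMOD (n : ℤ)]) :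
    b ≡ -4 [ZMOD (n : ℤ)] ∧ a ≡ 2 * ℓ - 1 [ZMOD (n : ℤ)] := by
  rw [← ZMod.intCast_eq_intCast_iff] at hb ha hl hbb0 hba0 hl2
  constructor <;> rw [← ZMod.intCast_eq_intCast_iff] <;> push_cast at *
  · linear_combination (1 + ℓ0 - a0) * hb + (b0 + 1) * hl2 + b0 * ha - (b0 + 1) * hl +
      ℓ0 * hbb0 + hba0
  · linear_combination -hl - hl2 - ℓ0 * ((1 + ℓ0 - a0) * hb + (b0 + 1) * hl2 + b0 * ha -
      (b0 + 1) * hl + ℓ0 * hbb0 + hba0)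
end

section
/- Let m ≥ 3, n = 4*n0 with n0 ≥ 3, and let a, b, ℓ ∈ Z_n satisfy: b = 4*b0 with 1 ≤ b0 < n0 and gcd(n0, b0) = 1, b*b0 ≡ 4 (mod n), a = 4*a0 + 1 with 0 ≤ a0 < n0 and b*a0 + a ≡ 1 (mod n), and ℓ = 4*ℓ0 + 2 (ℓ even). Define a graph X on vertex set Z_m × Z_n by the following adjacencies: (i, j) ~ (i, j ± 1) for all i, j; (i, 2i + 4j0 + δ) ~ (i + 1, 2i + b*j0 + δ*a) for 0 ≤ i ≤ m − 2, 0 ≤ j0 < n0, δ ∈ {0, 1}; and (m − 1, 2(m − 1) + 4j0 + δ) ~ (0, ℓ + b*j0 + δ*a) for 0 ≤ j0 < n0, δ ∈ {0, 1}. Then X is a well-defined simple graph in which every vertex has degree exactly 3. -/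
/-- The generating relation for the graph `X_b(m, n, a, b, ℓ)` of Construction 3.4
(case `ℓ` even): cycle edges, links between consecutive cycles, and links between
the last and the first cycle. -/
def XbRel (m n : ℕ) (a b ℓ : ZMod n) (p q : ZMod m × ZMod n) : Prop :=
  (p.1 = q.1 ∧ (q.2 = p.2 + 1 ∨ p.2 = q.2 + 1)) ∨
  (∃ i j0 δ : ℕ, i ≤ m - 2 ∧ j0 < n / 4 ∧ δ ≤ 1 ∧
    p = ((i : ZMod m), ((2 * i + 4 * j0 + δ : ℕ) : ZMod n)) ∧
    q = (((i + 1 : ℕ) : ZMod m),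
      ((2 * i : ℕ) : ZMod n) + b * (j0 : ZMod n) + (δ : ZMod n) * a)) ∨
  (∃ j0 δ : ℕ, j0 < n / 4 ∧ δ ≤ 1 ∧
    p = (((m - 1 : ℕ) : ZMod m), ((2 * (m - 1) + 4 * j0 + δ : ℕ) : ZMod n)) ∧
    q = ((0 : ZMod m), ℓ + b * (j0 : ZMod n) + (δ : ZMod n) * a))

/-- The graph `X_b(m, n, a, b, ℓ)` of Construction 3.4 (case `ℓ` even). -/
def Xb (m n : ℕ) (a b ℓ : ZMod n) : SimpleGraph (ZMod m × ZMod n) :=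
  SimpleGraph.fromRel (XbRel m n a b ℓ)

/-- Auxiliary: the "middle link" part of the relation. -/
def XbSrc2 (m n : ℕ) (a b : ZMod n) (p q : ZMod m × ZMod n) : Prop :=
  ∃ i j0 δ : ℕ, i ≤ m - 2 ∧ j0 < n / 4 ∧ δ ≤ 1 ∧
    p = ((i : ZMod m), ((2 * i + 4 * j0 + δ : ℕ) : ZMod n)) ∧
    q = (((i + 1 : ℕ) : ZMod m),
      ((2 * i : ℕ) : ZMod n) + b * (j0 : ZMod n) + (δ : ZMod n) * a)

/-- Auxiliary: the "wrap link" part of the relation. -/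
def XbSrc3 (m n : ℕ) (a b ℓ : ZMod n) (p q : ZMod m × ZMod n) : Prop :=
  ∃ j0 δ : ℕ, j0 < n / 4 ∧ δ ≤ 1 ∧
    p = (((m - 1 : ℕ) : ZMod m), ((2 * (m - 1) + 4 * j0 + δ : ℕ) : ZMod n)) ∧
    q = ((0 : ZMod m), ℓ + b * (j0 : ZMod n) + (δ : ZMod n) * a)

/-- Auxiliary: the link part of the relation. -/
def XbL (m n : ℕ) (a b ℓ : ZMod n) (p q : ZMod m × ZMod n) : Prop :=
  XbSrc2 m n a b p q ∨ XbSrc3 m n a b ℓ p q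

lemma XbRel_iff (m n : ℕ) (a b ℓ : ZMod n) (p q : ZMod m × ZMod n) :
    XbRel m n a b ℓ p q ↔
      (p.1 = q.1 ∧ (q.2 = p.2 + 1 ∨ p.2 = q.2 + 1)) ∨ XbL m n a b ℓ p q :=
  Iff.rfl

/-- Under the parameter conditions of Construction 3.4 with `ℓ` even,
the graph `X_b(m, n, a, b, ℓ)` is cubic: every vertex has exactly `3` neighbors. -/
theorem stmt8 (m n0 : ℕ) (hm : 3 ≤ m) (hn0 : 3 ≤ n0) (a0 b0 ℓ0 : ℕ)
    (hb0 : 1 ≤ b0) (hb0n : b0 < n0) (hgcd : Nat.gcd n0 b0 = 1) (ha0 : a0 < n0)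
    (a b ℓ : ZMod (4 * n0))
    (hadef : a = ((4 * a0 + 1 : ℕ) : ZMod (4 * n0)))
    (hbdef : b = ((4 * b0 : ℕ) : ZMod (4 * n0)))
    (hldef : ℓ = ((4 * ℓ0 + 2 : ℕ) : ZMod (4 * n0)))
    (hbb0 : b * (b0 : ZMod (4 * n0)) = 4)
    (hba0 : b * (a0 : ZMod (4 * n0)) + a = 1) :
    ∀ v : ZMod m × ZMod (4 * n0),
      ((Xb m (4 * n0) a b ℓ).neighborSet v).ncard = 3 := by
  intro v
  haveI : NeZero m := ⟨by omega⟩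
  haveI : NeZero (4 * n0) := ⟨by omega⟩
  haveI : Fact (1 < 4 * n0) := ⟨by omega⟩
  -- the reduction mod 4 ring hom
  obtain ⟨φ, hφnat⟩ : ∃ φ : ZMod (4 * n0) →+* ZMod 4,
      ∀ k : ℕ, φ ((k : ℕ) : ZMod (4 * n0)) = ((k : ℕ) : ZMod 4) :=
    ⟨ZMod.castHom ⟨n0, rfl⟩ (ZMod 4), fun k => map_natCast _ k⟩
  have hφa : φ a = ((4 * a0 + 1 : ℕ) : ZMod 4) := by rw [hadef]; exact hφnat _
  have hφb : φ b = ((4 * b0 : ℕ) : ZMod 4) := by rw [hbdef]; exact hφnat _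
  have hφl : φ ℓ = ((4 * ℓ0 + 2 : ℕ) : ZMod 4) := by rw [hldef]; exact hφnat _
  have mod4c : ∀ x y : ℕ, x % 4 = y % 4 → ((x : ℕ) : ZMod 4) = ((y : ℕ) : ZMod 4) :=
    fun x y h => (ZMod.natCast_eq_natCast_iff x y 4).2 h
  have mod4c' : ∀ x y : ℕ, ((x : ℕ) : ZMod 4) = ((y : ℕ) : ZMod 4) → x % 4 = y % 4 :=
    fun x y h => (ZMod.natCast_eq_natCast_iff x y 4).1 h
  have modNc : ∀ x y : ℕ, x ≡ y [MOD 4 * n0] →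
      ((x : ℕ) : ZMod (4 * n0)) = ((y : ℕ) : ZMod (4 * n0)) :=
    fun x y h => (ZMod.natCast_eq_natCast_iff x y _).2 h
  have modNc' : ∀ x y : ℕ, ((x : ℕ) : ZMod (4 * n0)) = ((y : ℕ) : ZMod (4 * n0)) →
      x ≡ y [MOD 4 * n0] :=
    fun x y h => (ZMod.natCast_eq_natCast_iff x y _).1 h
  have cancel4 : ∀ x y : ℕ, 4 * x ≡ 4 * y [MOD 4 * n0] → x ≡ y [MOD n0] := by
    intro x y h
    have h' : 4 * (x % n0) = 4 * (y % n0) := by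
      have h1 := Nat.mul_mod_mul_left 4 x n0
      have h2 := Nat.mul_mod_mul_left 4 y n0
      unfold Nat.ModEq at h
      omega
    have : x % n0 = y % n0 := by omega
    exact this
  have hb0sq : b0 * b0 ≡ 1 [MOD n0] := by
    have h0 : b * (b0 : ZMod (4 * n0)) = ((4 * (b0 * b0) : ℕ) : ZMod (4 * n0)) := by
      rw [hbdef]; push_cast; ring
    have h1 : ((4 * (b0 * b0) : ℕ) : ZMod (4 * n0)) = ((4 * 1 : ℕ) : ZMod (4 * n0)) := by
      rw [← h0, hbb0]; norm_num
    exact cancel4 _ _ (modNc' _ _ h1)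
  have binj : ∀ j0 j0' : ℕ, j0 < n0 → j0' < n0 →
      b * (j0 : ZMod (4 * n0)) = b * (j0' : ZMod (4 * n0)) → j0 = j0' := by
    intro j0 j0' h1 h2 h
    have e : ((4 * (b0 * j0) : ℕ) : ZMod (4 * n0)) = ((4 * (b0 * j0') : ℕ) : ZMod (4 * n0)) := by
      rw [hbdef] at h; push_cast at h ⊢; linear_combination h
    have e2 : b0 * j0 ≡ b0 * j0' [MOD n0] := cancel4 _ _ (modNc' _ _ e)
    have e3 : b0 * b0 * j0 ≡ b0 * b0 * j0' [MOD n0] := by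
      have := e2.mul_left b0; rw [← mul_assoc, ← mul_assoc] at this; exact this
    have e4 : 1 * j0 ≡ 1 * j0' [MOD n0] :=
      ((hb0sq.mul_right j0).symm.trans e3).trans (hb0sq.mul_right j0')
    rw [one_mul, one_mul] at e4
    unfold Nat.ModEq at e4
    rw [Nat.mod_eq_of_lt h1, Nat.mod_eq_of_lt h2] at e4
    exact e4
  have solve : ∀ c : ZMod (4 * n0), φ c = 0 →
      ∃ j0 : ℕ, j0 < n0 ∧ b * (j0 : ZMod (4 * n0)) = c := by
    intro c hc
    have hcv : ((c.val : ℕ) : ZMod (4 * n0)) = c := ZMod.natCast_rightInverse c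
    have h1 : ((c.val : ℕ) : ZMod 4) = ((0 : ℕ) : ZMod 4) := by
      rw [← hφnat c.val, hcv, hc]; norm_num
    have hdvd : (4 : ℕ) ∣ c.val := (ZMod.natCast_eq_zero_iff _ 4).1 (by
      rw [h1]; norm_num)
    obtain ⟨c', hc'⟩ := hdvd
    refine ⟨(b0 * c') % n0, Nat.mod_lt _ (by omega), ?_⟩
    have t1 : b0 * ((b0 * c') % n0) ≡ b0 * (b0 * c') [MOD n0] :=
      (Nat.mod_modEq (b0 * c') n0).mul_left b0
    have t2 : b0 * (b0 * c') = b0 * b0 * c' := by ring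
    rw [t2] at t1
    have h1' : b0 * ((b0 * c') % n0) ≡ 1 * c' [MOD n0] := t1.trans (hb0sq.mul_right c')
    rw [one_mul] at h1'
    have h2 : 4 * (b0 * ((b0 * c') % n0)) ≡ 4 * c' [MOD 4 * n0] := by
      unfold Nat.ModEq at h1' ⊢
      rw [Nat.mul_mod_mul_left, Nat.mul_mod_mul_left, h1']
    have h3 : ((4 * (b0 * ((b0 * c') % n0)) : ℕ) : ZMod (4 * n0))
        = ((4 * c' : ℕ) : ZMod (4 * n0)) := modNc _ _ h2
    calc b * (((b0 * c') % n0 : ℕ) : ZMod (4 * n0))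
        = ((4 * (b0 * ((b0 * c') % n0)) : ℕ) : ZMod (4 * n0)) := by
          rw [hbdef]; push_cast; ring
      _ = ((4 * c' : ℕ) : ZMod (4 * n0)) := h3
      _ = ((c.val : ℕ) : ZMod (4 * n0)) := by rw [hc']
      _ = c := hcv
  -- basic data of the vertex
  set I := v.1.val with hI
  have hIm : I < m := ZMod.val_lt v.1
  have hvI : ((I : ℕ) : ZMod m) = v.1 := ZMod.natCast_rightInverse v.1
  set d := (v.2 - ((2 * I : ℕ) : ZMod (4 * n0))).val with hdd
  have hdN : d < 4 * n0 := by rw [hdd]; exact ZMod.val_lt _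
  have hd : v.2 = ((2 * I : ℕ) : ZMod (4 * n0)) + ((d : ℕ) : ZMod (4 * n0)) := by
    rw [hdd, ZMod.natCast_rightInverse (v.2 - ((2 * I : ℕ) : ZMod (4 * n0)))]; ring
  have hd' : v.2 = ((2 * I + d : ℕ) : ZMod (4 * n0)) := by rw [Nat.cast_add]; exact hd
  have hφv : φ v.2 = ((2 * I + d : ℕ) : ZMod 4) := by rw [hd']; exact hφnat _
  -- inversion lemma for "v is the source of a link"
  have haveA : ∀ u, XbL m (4 * n0) a b ℓ v u → ∃ j0 δ : ℕ, j0 < n0 ∧ δ ≤ 1 ∧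
      v.2 = ((2 * I + 4 * j0 + δ : ℕ) : ZMod (4 * n0)) ∧
      ((I ≤ m - 2 ∧ u = (((I + 1 : ℕ) : ZMod m),
          ((2 * I : ℕ) : ZMod (4 * n0)) +
            (b * (j0 : ZMod (4 * n0)) + (δ : ZMod (4 * n0)) * a))) ∨
       (I = m - 1 ∧ u = ((0 : ZMod m),
          ℓ + (b * (j0 : ZMod (4 * n0)) + (δ : ZMod (4 * n0)) * a)))) := by
    intro u hL
    rcases hL with ⟨i, j0, δ, hi, hj0, hδ, hp, hq⟩ | ⟨j0, δ, hj0, hδ, hp, hq⟩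
    · have h1 : v.1 = ((i : ℕ) : ZMod m) := congrArg Prod.fst hp
      have hIi : I = i := by rw [hI, h1]; exact ZMod.val_cast_of_lt (by omega)
      refine ⟨j0, δ, by omega, hδ, ?_, Or.inl ⟨by omega, ?_⟩⟩
      · rw [hIi]; exact congrArg Prod.snd hp
      · rw [hq, hIi]; exact Prod.ext_iff.mpr ⟨rfl, add_assoc _ _ _⟩
    · have h1 : v.1 = ((m - 1 : ℕ) : ZMod m) := congrArg Prod.fst hp
      have hIi : I = m - 1 := by rw [hI, h1]; exact ZMod.val_cast_of_lt (by omega)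
      refine ⟨j0, δ, by omega, hδ, ?_, Or.inr ⟨hIi, ?_⟩⟩
      · rw [hIi]; exact congrArg Prod.snd hp
      · rw [hq]; exact Prod.ext_iff.mpr ⟨rfl, add_assoc _ _ _⟩
  -- inversion lemma for "v is the target of a link"
  have haveB : ∀ u, XbL m (4 * n0) a b ℓ u v → ∃ j0 δ : ℕ, j0 < n0 ∧ δ ≤ 1 ∧
      φ v.2 = ((2 * I + 2 + δ : ℕ) : ZMod 4) ∧
      ((I = 0 ∧ v.2 = ℓ + (b * (j0 : ZMod (4 * n0)) + (δ : ZMod (4 * n0)) * a) ∧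
          u = (((m - 1 : ℕ) : ZMod m),
            ((2 * (m - 1) + 4 * j0 + δ : ℕ) : ZMod (4 * n0)))) ∨
       (1 ≤ I ∧ v.2 = ((2 * (I - 1) : ℕ) : ZMod (4 * n0)) +
            (b * (j0 : ZMod (4 * n0)) + (δ : ZMod (4 * n0)) * a) ∧
          u = (((I - 1 : ℕ) : ZMod m),
            ((2 * (I - 1) + 4 * j0 + δ : ℕ) : ZMod (4 * n0))))) := by
    intro u hL
    rcases hL with ⟨i, j0, δ, hi, hj0, hδ, hp, hq⟩ | ⟨j0, δ, hj0, hδ, hp, hq⟩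
    · have h1 : v.1 = ((i + 1 : ℕ) : ZMod m) := congrArg Prod.fst hq
      have hIi : I = i + 1 := by rw [hI, h1]; exact ZMod.val_cast_of_lt (by omega)
      have h2 : v.2 = ((2 * i : ℕ) : ZMod (4 * n0)) +
          (b * (j0 : ZMod (4 * n0)) + (δ : ZMod (4 * n0)) * a) := by
        have := congrArg Prod.snd hq; rw [this]; ring
      refine ⟨j0, δ, by omega, hδ, ?_, Or.inr ⟨by omega, ?_, ?_⟩⟩
      · have e0 : φ v.2 = ((2 * i + (4 * b0 * j0 + δ * (4 * a0 + 1)) : ℕ) : ZMod 4) := by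
          rw [h2]
          simp only [map_add, map_mul, hφnat, hφb, hφa]
          push_cast; ring
        rw [e0]
        apply mod4c
        rw [show 2 * i + (4 * b0 * j0 + δ * (4 * a0 + 1))
            = 2 * i + δ + 4 * (b0 * j0 + δ * a0) from by ring,
          Nat.add_mul_mod_self_left]
        omega
      · rw [show I - 1 = i from by omega]; exact h2
      · rw [hp, show I - 1 = i from by omega]
    · have h1 : v.1 = (0 : ZMod m) := congrArg Prod.fst hq
      have hIi : I = 0 := by rw [hI, h1]; exact ZMod.val_zero
      have h2 : v.2 = ℓ + (b * (j0 : ZMod (4 * n0)) + (δ : ZMod (4 * n0)) * a) := by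
        have := congrArg Prod.snd hq; rw [this]; ring
      refine ⟨j0, δ, by omega, hδ, ?_, Or.inl ⟨hIi, h2, ?_⟩⟩
      · have e0 : φ v.2 = ((4 * ℓ0 + 2 + (4 * b0 * j0 + δ * (4 * a0 + 1)) : ℕ) : ZMod 4) := by
          rw [h2]
          simp only [map_add, map_mul, hφnat, hφb, hφa, hφl]
          push_cast; ring
        rw [e0]
        apply mod4c
        rw [show 4 * ℓ0 + 2 + (4 * b0 * j0 + δ * (4 * a0 + 1))
            = 2 + δ + 4 * (ℓ0 + b0 * j0 + δ * a0) from by ring,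
          Nat.add_mul_mod_self_left]
        omega
      · rw [hp]
  -- uniqueness of the link neighbor
  have uniq : ∀ u u', (XbL m (4 * n0) a b ℓ v u ∨ XbL m (4 * n0) a b ℓ u v) →
      (XbL m (4 * n0) a b ℓ v u' ∨ XbL m (4 * n0) a b ℓ u' v) → u = u' := by
    intro u u' h h'
    rcases h with h | h <;> rcases h' with h' | h'
    · obtain ⟨j0, δ, hj0, hδ, hs, hc⟩ := haveA u h
      obtain ⟨j0', δ', hj0', hδ', hs', hc'⟩ := haveA u' h'
      have e : 2 * I + 4 * j0 + δ ≡ 2 * I + 4 * j0' + δ' [MOD 4 * n0] :=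
        modNc' _ _ (hs.symm.trans hs')
      rw [show 2 * I + 4 * j0 + δ = 2 * I + (4 * j0 + δ) from by ring,
        show 2 * I + 4 * j0' + δ' = 2 * I + (4 * j0' + δ') from by ring] at e
      have e3 := Nat.ModEq.add_left_cancel' (2 * I) e
      unfold Nat.ModEq at e3
      rw [Nat.mod_eq_of_lt (by omega), Nat.mod_eq_of_lt (by omega)] at e3
      have h4 : j0 = j0' := by omega
      have h5 : δ = δ' := by omega
      subst h4; subst h5
      rcases hc with ⟨hi1, rfl⟩ | ⟨hi1, rfl⟩ <;>
        rcases hc' with ⟨hi2, rfl⟩ | ⟨hi2, rfl⟩ <;>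
        first
        | rfl
        | (exfalso; omega)
    · exfalso
      obtain ⟨j0, δ, hj0, hδ, hs, _⟩ := haveA u h
      obtain ⟨j0', δ', hj0', hδ', hr', _⟩ := haveB u' h'
      have h1 : φ v.2 = ((2 * I + 4 * j0 + δ : ℕ) : ZMod 4) := by rw [hs]; exact hφnat _
      have := mod4c' _ _ (h1.symm.trans hr')
      omega
    · exfalso
      obtain ⟨j0, δ, hj0, hδ, hr, _⟩ := haveB u h
      obtain ⟨j0', δ', hj0', hδ', hs', _⟩ := haveA u' h'
      have h1 : φ v.2 = ((2 * I + 4 * j0' + δ' : ℕ) : ZMod 4) := by rw [hs']; exact hφnat _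
      have := mod4c' _ _ (h1.symm.trans hr)
      omega
    · obtain ⟨j0, δ, hj0, hδ, hr, hc⟩ := haveB u h
      obtain ⟨j0', δ', hj0', hδ', hr', hc'⟩ := haveB u' h'
      have hδδ : δ = δ' := by
        have := mod4c' _ _ (hr.symm.trans hr'); omega
      subst hδδ
      rcases hc with ⟨hi1, hv2, rfl⟩ | ⟨hi1, hv2, rfl⟩ <;>
        rcases hc' with ⟨hi2, hv2', rfl⟩ | ⟨hi2, hv2', rfl⟩
      · have e := add_left_cancel (hv2.symm.trans hv2')
        have e2 := add_right_cancel e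
        have := binj _ _ hj0 hj0' e2
        subst this; rfl
      · exfalso; omega
      · exfalso; omega
      · have e := add_left_cancel (hv2.symm.trans hv2')
        have e2 := add_right_cancel e
        have := binj _ _ hj0 hj0' e2
        subst this; rfl
  -- existence of the link neighbor
  have exw : ∃ w : ZMod m × ZMod (4 * n0), w.1 ≠ v.1 ∧
      (XbL m (4 * n0) a b ℓ v w ∨ XbL m (4 * n0) a b ℓ w v) := by
    by_cases hsrc : d % 4 ≤ 1
    · -- v is a source
      have hj0 : d / 4 < n0 := by omega
      have hspec : v.2 = ((2 * I + 4 * (d / 4) + d % 4 : ℕ) : ZMod (4 * n0)) := by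
        rw [hd']; congr 1; omega
      by_cases him : I = m - 1
      · refine ⟨((0 : ZMod m), ℓ + (b * ((d / 4 : ℕ) : ZMod (4 * n0)) +
            ((d % 4 : ℕ) : ZMod (4 * n0)) * a)), ?_,
            Or.inl (Or.inr ⟨d / 4, d % 4, by omega, by omega, ?_, ?_⟩)⟩
        · intro hc
          have : I = 0 := by rw [hI, ← hc]; exact ZMod.val_zero
          omega
        · refine Prod.ext_iff.mpr ⟨?_, ?_⟩
          · rw [← hvI, him]
          · rw [hspec, him]
        · exact Prod.ext_iff.mpr ⟨rfl, (add_assoc _ _ _).symm⟩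
      · refine ⟨(((I + 1 : ℕ) : ZMod m), ((2 * I : ℕ) : ZMod (4 * n0)) +
            (b * ((d / 4 : ℕ) : ZMod (4 * n0)) + ((d % 4 : ℕ) : ZMod (4 * n0)) * a)), ?_,
            Or.inl (Or.inl ⟨I, d / 4, d % 4, by omega, by omega, by omega, ?_, ?_⟩)⟩
        · intro hc
          have : v.1.val = I + 1 := by rw [← hc]; exact ZMod.val_cast_of_lt (by omega)
          omega
        · exact Prod.ext_iff.mpr ⟨hvI.symm, hspec⟩
        · exact Prod.ext_iff.mpr ⟨rfl, (add_assoc _ _ _).symm⟩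
    · -- v is a target
      obtain ⟨δ, hδd⟩ : ∃ δ, d % 4 = δ + 2 := ⟨d % 4 - 2, by omega⟩
      have hδ : δ ≤ 1 := by omega
      by_cases hi0 : I = 0
      · -- wrap target
        have hφc : φ (v.2 - ℓ - (δ : ZMod (4 * n0)) * a) = 0 := by
          have e0 : φ (v.2 - ℓ - (δ : ZMod (4 * n0)) * a)
              = ((2 * I + d : ℕ) : ZMod 4) - ((4 * ℓ0 + 2 : ℕ) : ZMod 4)
                - ((δ : ℕ) : ZMod 4) * ((4 * a0 + 1 : ℕ) : ZMod 4) := by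
            simp only [map_sub, map_mul, hφnat, hφl, hφa, hφv]
          have key : ((2 * I + d : ℕ) : ZMod 4)
              = ((4 * ℓ0 + 2 + δ * (4 * a0 + 1) : ℕ) : ZMod 4) := by
            apply mod4c
            rw [show 4 * ℓ0 + 2 + δ * (4 * a0 + 1)
                = 2 + δ + 4 * (ℓ0 + δ * a0) from by ring,
              Nat.add_mul_mod_self_left]
            omega
          rw [e0, key, Nat.cast_add, Nat.cast_mul]
          push_cast
          ring
        obtain ⟨j0, hj0, hbj⟩ := solve _ hφc
        refine ⟨(((m - 1 : ℕ) : ZMod m), ((2 * (m - 1) + 4 * j0 + δ : ℕ) : ZMod (4 * n0))),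
          ?_, Or.inr (Or.inr ⟨j0, δ, by omega, hδ, rfl, ?_⟩)⟩
        · intro hc
          have : I = m - 1 := by rw [hI, ← hc]; exact ZMod.val_cast_of_lt (by omega)
          omega
        · refine Prod.ext_iff.mpr ⟨?_, ?_⟩
          · rw [← hvI, hi0]; norm_num
          · rw [hbj]; ring
      · -- middle target
        have hφc : φ (v.2 - ((2 * (I - 1) : ℕ) : ZMod (4 * n0))
            - (δ : ZMod (4 * n0)) * a) = 0 := by
          have e0 : φ (v.2 - ((2 * (I - 1) : ℕ) : ZMod (4 * n0)) - (δ : ZMod (4 * n0)) * a)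
              = ((2 * I + d : ℕ) : ZMod 4) - ((2 * (I - 1) : ℕ) : ZMod 4)
                - ((δ : ℕ) : ZMod 4) * ((4 * a0 + 1 : ℕ) : ZMod 4) := by
            simp only [map_sub, map_mul, hφnat, hφa, hφv]
          have key : ((2 * I + d : ℕ) : ZMod 4)
              = ((2 * (I - 1) + δ * (4 * a0 + 1) : ℕ) : ZMod 4) := by
            apply mod4c
            rw [show 2 * (I - 1) + δ * (4 * a0 + 1)
                = 2 * (I - 1) + δ + 4 * (δ * a0) from by ring,
              Nat.add_mul_mod_self_left]
            omega
          rw [e0, key, Nat.cast_add, Nat.cast_mul]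
          push_cast
          ring
        obtain ⟨j0, hj0, hbj⟩ := solve _ hφc
        refine ⟨(((I - 1 : ℕ) : ZMod m), ((2 * (I - 1) + 4 * j0 + δ : ℕ) : ZMod (4 * n0))),
          ?_, Or.inr (Or.inl ⟨I - 1, j0, δ, ?_, ?_, hδ, rfl, ?_⟩)⟩
        · intro hc
          have h5 : ((I - 1 : ℕ) : ZMod m).val = I - 1 := ZMod.val_cast_of_lt (by omega)
          have hc' : ((I - 1 : ℕ) : ZMod m) = v.1 := hc
          rw [hc'] at h5
          omega
        · omega
        · omega
        · refine Prod.ext_iff.mpr ⟨?_, ?_⟩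
          · rw [show I - 1 + 1 = I from by omega, hvI]
          · rw [hbj]; ring
  obtain ⟨w, hwne, hw⟩ := exw
  -- the neighbor set
  have hset : (Xb m (4 * n0) a b ℓ).neighborSet v
      = {(v.1, v.2 + 1), (v.1, v.2 - 1), w} := by
    ext u
    simp only [SimpleGraph.mem_neighborSet, Set.mem_insert_iff, Set.mem_singleton_iff,
      Xb, SimpleGraph.fromRel_adj]
    constructor
    · rintro ⟨hne, hrel⟩
      rw [XbRel_iff, XbRel_iff] at hrel
      rcases hrel with (⟨h1, h2⟩ | hL) | (⟨h1, h2⟩ | hL)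
      · rcases h2 with h2 | h2
        · exact Or.inl (Prod.ext_iff.mpr ⟨h1.symm, h2⟩)
        · exact Or.inr (Or.inl (Prod.ext_iff.mpr ⟨h1.symm, eq_sub_of_add_eq h2.symm⟩))
      · exact Or.inr (Or.inr (uniq u w (Or.inl hL) hw))
      · rcases h2 with h2 | h2
        · exact Or.inr (Or.inl (Prod.ext_iff.mpr ⟨h1, eq_sub_of_add_eq h2.symm⟩))
        · exact Or.inl (Prod.ext_iff.mpr ⟨h1, h2⟩)
      · exact Or.inr (Or.inr (uniq u w (Or.inr hL) hw))
    · intro h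
      rcases h with rfl | rfl | rfl
      · refine ⟨?_, Or.inl (Or.inl ⟨rfl, Or.inl rfl⟩)⟩
        intro hc
        have h2 := congrArg Prod.snd hc
        exact one_ne_zero (left_eq_add.mp h2)
      · refine ⟨?_, Or.inl (Or.inl ⟨rfl, Or.inr (by ring)⟩)⟩
        intro hc
        have h2 := congrArg Prod.snd hc
        exact one_ne_zero (sub_eq_self.mp h2.symm)
      · refine ⟨fun hc => hwne (congrArg Prod.fst hc).symm, ?_⟩
        rcases hw with hL | hL
        · exact Or.inl ((XbRel_iff _ _ _ _ _ _ _).mpr (Or.inr hL))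
        · exact Or.inr ((XbRel_iff _ _ _ _ _ _ _).mpr (Or.inr hL))
  rw [hset]
  have h20 : (v.1, v.2 + 1) ≠ (v.1, v.2 - 1) := by
    intro hc
    have h2 := (Prod.ext_iff.mp hc).2
    have h2' : ((2 : ℕ) : ZMod (4 * n0)) = ((0 : ℕ) : ZMod (4 * n0)) := by
      push_cast
      linear_combination h2
    have := modNc' _ _ h2'
    have hdvd : 4 * n0 ∣ 2 := (Nat.modEq_zero_iff_dvd).1 this
    have := Nat.le_of_dvd (by norm_num) hdvd
    omega
  have hd2 : (v.1, v.2 + 1) ≠ w := fun hc => hwne (congrArg Prod.fst hc).symm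
  have hd3 : (v.1, v.2 - 1) ≠ w := fun hc => hwne (congrArg Prod.fst hc).symm
  rw [Set.ncard_insert_of_notMem (by simp [h20, hd2])
      ((Set.finite_singleton _).insert _),
    Set.ncard_insert_of_notMem (by simp [hd3]) (Set.finite_singleton _),
    Set.ncard_singleton]
end

section
/- With the graph X = X_b(m, n, a, b, ℓ) as in Construction 3.4 with ℓ = 4*ℓ0 + 2 even, suppose in addition that (ℓ + 2)*(b0 − 1) ≡ 0 (mod n), where b = 4*b0. Then the permutation γ of Z_m × Z_n defined by γ(i, j) = (i + 1, j + 2) for 0 ≤ i ≤ m − 2 and γ(m − 1, j) = (0, ℓ + j − 2(m − 2)), is an automorphism of X. -/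
lemma castNe_aux {m x y : ℕ} (hx : x < m) (hy : y < m) (hxy : x ≠ y) :
    (x : ZMod m) ≠ (y : ZMod m) := by
  haveI : NeZero m := ⟨by omega⟩
  intro h
  apply hxy
  have := congrArg ZMod.val h
  rwa [ZMod.val_cast_of_lt hx, ZMod.val_cast_of_lt hy] at this

lemma reflect_aux {V : Type} [Finite V] (G : SimpleGraph V) (γ : V → V)
    (hinj : Function.Injective γ)
    (hpres : ∀ p q, G.Adj p q → G.Adj (γ p) (γ q)) :
    ∀ p q, G.Adj (γ p) (γ q) → G.Adj p q := by
  intro p q h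
  classical
  set E : Set (V × V) := {x | G.Adj x.1 x.2} with hE
  have hfin : E.Finite := Set.toFinite E
  have hmap : Set.MapsTo (Prod.map γ γ) E E := fun x hx => hpres x.1 x.2 hx
  have hinjP : Function.Injective (Prod.map γ γ) := by
    intro x y hxy
    have h1 : γ x.1 = γ y.1 := congrArg Prod.fst hxy
    have h2 : γ x.2 = γ y.2 := congrArg Prod.snd hxy
    exact Prod.ext (hinj h1) (hinj h2)
  have hbij := (hfin.injOn_iff_bijOn_of_mapsTo hmap).mp hinjP.injOn
  obtain ⟨⟨x, y⟩, hxy, hfx⟩ := hbij.surjOn (show ((γ p, γ q) : V × V) ∈ E from h)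
  have h1 : γ x = γ p := congrArg Prod.fst hfx
  have h2 : γ y = γ q := congrArg Prod.snd hfx
  rw [← hinj h1, ← hinj h2]
  exact hxy

/-- sufficiency direction of Lemma 4.1, `ℓ` even: if moreover
`(ℓ + 2)*(b0 - 1) ≡ 0 (mod n)`, then the permutation `γ` with
`γ(i,j) = (i+1, j+2)` for `0 ≤ i ≤ m-2` and `γ(m-1, j) = (0, ℓ + j - 2(m-2))`
is an automorphism of `X_b(m, n, a, b, ℓ)`. -/
theorem stmt9 (m n0 : ℕ) (hm : 3 ≤ m) (hn0 : 2 ≤ n0) (a0 b0 ℓ0 : ℕ)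
    (hb0 : 1 ≤ b0) (hb0n : b0 < n0) (hgcd : Nat.gcd n0 b0 = 1) (ha0 : a0 < n0)
    (a b ℓ : ZMod (4 * n0))
    (hadef : a = ((4 * a0 + 1 : ℕ) : ZMod (4 * n0)))
    (hbdef : b = ((4 * b0 : ℕ) : ZMod (4 * n0)))
    (hldef : ℓ = ((4 * ℓ0 + 2 : ℕ) : ZMod (4 * n0)))
    (hbb0 : b * (b0 : ZMod (4 * n0)) = 4)
    (hba0 : b * (a0 : ZMod (4 * n0)) + a = 1)
    (hcond : (ℓ + 2) * ((b0 : ZMod (4 * n0)) - 1) = 0)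
    (γ : ZMod m × ZMod (4 * n0) → ZMod m × ZMod (4 * n0))
    (hγ : γ = fun p => if p.1 = ((m - 1 : ℕ) : ZMod m)
      then ((0 : ZMod m), ℓ + p.2 - ((2 * (m - 2) : ℕ) : ZMod (4 * n0)))
      else (p.1 + 1, p.2 + 2)) :
    Function.Bijective γ ∧
      ∀ p q, (Xb m (4 * n0) a b ℓ).Adj (γ p) (γ q) ↔
        (Xb m (4 * n0) a b ℓ).Adj p q := by
  haveI : NeZero m := ⟨by omega⟩
  haveI : NeZero (4 * n0) := ⟨by omega⟩
  push_cast at hbdef hldef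
  have hm1cast : ((m - 1 : ℕ) : ZMod m) = -1 := by
    rw [Nat.cast_sub (by omega), ZMod.natCast_self]
    simp
  -- injectivity
  have hγinj : Function.Injective γ := by
    intro p q h
    rw [hγ] at h
    by_cases hp : p.1 = ((m - 1 : ℕ) : ZMod m) <;>
      by_cases hq : q.1 = ((m - 1 : ℕ) : ZMod m)
    · simp only [if_pos hp, if_pos hq, Prod.mk.injEq] at h
      refine Prod.ext (hp.trans hq.symm) ?_
      have := h.2
      linear_combination this
    · simp only [if_pos hp, if_neg hq, Prod.mk.injEq] at h
      exfalso
      apply hq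
      rw [hm1cast]
      linear_combination - h.1
    · simp only [if_neg hp, if_pos hq, Prod.mk.injEq] at h
      exfalso
      apply hp
      rw [hm1cast]
      linear_combination h.1
    · simp only [if_neg hp, if_neg hq, Prod.mk.injEq] at h
      exact Prod.ext (by linear_combination h.1) (by linear_combination h.2)
  have hbij : Function.Bijective γ := Finite.injective_iff_bijective.mp hγinj
  -- arithmetic facts
  have h4n0 : (4 : ZMod (4 * n0)) * (n0 : ZMod (4 * n0)) = 0 := by
    have := ZMod.natCast_self (4 * n0)
    push_cast at this
    exact this
  have hbn0 : b * (n0 : ZMod (4 * n0)) = 0 := by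
    rw [hbdef]
    linear_combination (b0 : ZMod (4 * n0)) * h4n0
  have hl2b : b * ((ℓ0 : ZMod (4 * n0)) + 1) = ℓ + 2 := by
    linear_combination hcond + ((ℓ0 : ZMod (4 * n0)) + 1) * hbdef -
      (b0 : ZMod (4 * n0)) * hldef
  have hmod4 : ∀ t δ : ℕ, ((4 * (t % n0) + δ : ℕ) : ZMod (4 * n0)) =
      ((4 * t + δ : ℕ) : ZMod (4 * n0)) := by
    intro t δ
    conv_rhs => rw [← Nat.div_add_mod t n0]
    push_cast
    linear_combination (-(t / n0 : ℕ) : ZMod (4 * n0)) * h4n0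
  have hbmod : ∀ t : ℕ, b * ((t % n0 : ℕ) : ZMod (4 * n0)) =
      b * ((t : ℕ) : ZMod (4 * n0)) := by
    intro t
    conv_rhs => rw [← Nat.div_add_mod t n0]
    push_cast
    linear_combination (-(t / n0 : ℕ) : ZMod (4 * n0)) * hbn0
  have hdiv4 : (4 * n0) / 4 = n0 := by omega
  -- the key step: γ maps the generating relation into itself
  have hrel : ∀ p q, XbRel m (4 * n0) a b ℓ p q →
      XbRel m (4 * n0) a b ℓ (γ p) (γ q) := by
    rintro p q (⟨h1, h2⟩ | ⟨i, j0, δ, hi, hj0, hδ, hp, hq⟩ | ⟨j0, δ, hj0, hδ, hp, hq⟩)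
    · -- rung edges
      left
      rw [hγ]
      dsimp only
      rw [← h1]
      by_cases hc : p.1 = ((m - 1 : ℕ) : ZMod m)
      · simp only [if_pos hc]
        refine ⟨by trivial, ?_⟩
        rcases h2 with h | h
        · exact Or.inl (by rw [h]; ring)
        · exact Or.inr (by rw [h]; ring)
      · simp only [if_neg hc]
        refine ⟨by trivial, ?_⟩
        rcases h2 with h | h
        · exact Or.inl (by rw [h]; ring)
        · exact Or.inr (by rw [h]; ring)
    · -- spoke edges i → i+1
      by_cases hi2 : i = m - 2
      · subst hi2
        right; right
        refine ⟨j0, δ, hj0, hδ, ?_, ?_⟩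
        · rw [hγ, hp]
          have hne : ((m - 2 : ℕ) : ZMod m) ≠ ((m - 1 : ℕ) : ZMod m) :=
            castNe_aux (by omega) (by omega) (by omega)
          simp only [if_neg hne, Prod.mk.injEq]
          constructor
          · rw [show m - 1 = (m - 2) + 1 from by omega]
            push_cast
            ring
          · rw [show 2 * (m - 1) + 4 * j0 + δ = (2 * (m - 2) + 4 * j0 + δ) + 2 from by omega]
            push_cast
            ring
        · rw [hγ, hq]
          have heq : (((m - 2) + 1 : ℕ) : ZMod m) = ((m - 1 : ℕ) : ZMod m) := by
            rw [show (m - 2) + 1 = m - 1 from by omega]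
          simp only [if_pos heq, Prod.mk.injEq]
          exact ⟨by trivial, by ring⟩
      · -- i < m - 2
        have hilt : i < m - 2 := by omega
        right; left
        refine ⟨i + 1, j0, δ, by omega, hj0, hδ, ?_, ?_⟩
        · rw [hγ, hp]
          have hne : ((i : ℕ) : ZMod m) ≠ ((m - 1 : ℕ) : ZMod m) :=
            castNe_aux (by omega) (by omega) (by omega)
          simp only [if_neg hne, Prod.mk.injEq]
          constructor
          · push_cast; ring
          · push_cast; ring
        · rw [hγ, hq]
          have hne : ((i + 1 : ℕ) : ZMod m) ≠ ((m - 1 : ℕ) : ZMod m) :=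
            castNe_aux (by omega) (by omega) (by omega)
          simp only [if_neg hne, Prod.mk.injEq]
          constructor
          · push_cast; ring
          · push_cast; ring
    · -- wrap-around edges
      right; left
      refine ⟨0, (ℓ0 + 1 + j0) % n0, δ, by omega, ?_, hδ, ?_, ?_⟩
      · rw [hdiv4]
        exact Nat.mod_lt _ (by omega)
      · rw [hγ, hp]
        simp only [eq_self_iff_true, if_true, Prod.mk.injEq]
        constructor
        · simp
        · rw [show 2 * (m - 1) + 4 * j0 + δ = 2 * (m - 2) + (2 + 4 * j0 + δ) from by omega]
          rw [show 2 * 0 + 4 * ((ℓ0 + 1 + j0) % n0) + δ = 4 * ((ℓ0 + 1 + j0) % n0) + δ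
            from by omega]
          rw [hmod4 (ℓ0 + 1 + j0) δ]
          push_cast
          linear_combination hldef
      · rw [hγ, hq]
        have hne : (0 : ZMod m) ≠ ((m - 1 : ℕ) : ZMod m) := by
          have := castNe_aux (show 0 < m from by omega) (show m - 1 < m from by omega)
            (show 0 ≠ m - 1 from by omega)
          simpa using this
        simp only [if_neg hne, Prod.mk.injEq]
        constructor
        · push_cast; ring
        · rw [hbmod (ℓ0 + 1 + j0)]
          push_cast
          linear_combination -hl2b
  -- assemble
  have hpres : ∀ p q, (Xb m (4 * n0) a b ℓ).Adj p q →
      (Xb m (4 * n0) a b ℓ).Adj (γ p) (γ q) := by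
    intro p q h
    rw [Xb, SimpleGraph.fromRel_adj] at h ⊢
    exact ⟨fun e => h.1 (hγinj e), h.2.imp (hrel p q) (hrel q p)⟩
  exact ⟨hbij, fun p q => ⟨reflect_aux _ γ hγinj hpres p q, hpres p q⟩⟩
end

section
/- Let m = 2*m0 be even, n = 4*n0 with n0 ≥ 3, and let X = X_b(m, n, a, b, ℓ) as in Construction 3.4 with ℓ = 4*ℓ0 + 2 even, b = 4*b0, and suppose (ℓ + 2)*(b0 − 1) ≡ 0 (mod n) and 2*(ℓ + 2) ≡ m0*(b + 4) (mod n). Then the permutation β of Z_m × Z_n defined by β(2i + ε, j) = (2i + ε, ε*(a − 1) + 1 + i*(4 − b) − j) for 0 ≤ i < m0, ε ∈ {0, 1}, j ∈ Z_n, is an automorphism of X. -/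
/-- for `m = 2*m0` even and `ℓ` even, under the standing parameter
conditions together with `(ℓ+2)*(b0-1) ≡ 0` and `2*(ℓ+2) ≡ m0*(b+4)` modulo `n`,
the permutation `β` with `β(2i+ε, j) = (2i+ε, ε(a-1) + 1 + i(4-b) - j)` is an
automorphism of `X_b(m, n, a, b, ℓ)`. -/
theorem stmt10 (m0 n0 : ℕ) (hm0 : 2 ≤ m0) (hn0 : 3 ≤ n0) (a0 b0 ℓ0 : ℕ)
    (hb0 : 1 ≤ b0) (hb0n : b0 < n0) (hgcd : Nat.gcd n0 b0 = 1) (ha0 : a0 < n0)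
    (a b ℓ : ZMod (4 * n0))
    (hadef : a = ((4 * a0 + 1 : ℕ) : ZMod (4 * n0)))
    (hbdef : b = ((4 * b0 : ℕ) : ZMod (4 * n0)))
    (hldef : ℓ = ((4 * ℓ0 + 2 : ℕ) : ZMod (4 * n0)))
    (hbb0 : b * (b0 : ZMod (4 * n0)) = 4)
    (hba0 : b * (a0 : ZMod (4 * n0)) + a = 1)
    (hcond1 : (ℓ + 2) * ((b0 : ZMod (4 * n0)) - 1) = 0)
    (hcond2 : 2 * (ℓ + 2) = (m0 : ZMod (4 * n0)) * (b + 4))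
    (β : ZMod (2 * m0) × ZMod (4 * n0) → ZMod (2 * m0) × ZMod (4 * n0))
    (hβ : ∀ i ε : ℕ, i < m0 → ε ≤ 1 → ∀ j : ZMod (4 * n0),
      β (((2 * i + ε : ℕ) : ZMod (2 * m0)), j) =
        (((2 * i + ε : ℕ) : ZMod (2 * m0)),
          (ε : ZMod (4 * n0)) * (a - 1) + 1 + (i : ZMod (4 * n0)) * (4 - b) - j)) :
    Function.Bijective β ∧
      ∀ p q, (Xb (2 * m0) (4 * n0) a b ℓ).Adj (β p) (β q) ↔
        (Xb (2 * m0) (4 * n0) a b ℓ).Adj p q := by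
  haveI : NeZero n0 := ⟨by omega⟩
  haveI : NeZero (4 * n0) := ⟨by omega⟩
  haveI : NeZero (2 * m0) := ⟨by omega⟩
  -- `master`: solving congruences mod `n0`, lifted (times 4) to `4*n0`.
  have master : ∀ s u : ℕ, ∃ j' : ℕ, j' < n0 ∧
      ((4 * (j' + s) : ℕ) : ZMod (4 * n0)) = ((4 * u : ℕ) : ZMod (4 * n0)) := by
    intro s u
    refine ⟨((u : ZMod n0) - (s : ZMod n0)).val, ZMod.val_lt _, ?_⟩
    have h1 : ((u : ZMod n0) - (s : ZMod n0)).val + s ≡ u [MOD n0] := by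
      rw [← ZMod.natCast_eq_natCast_iff]
      push_cast
      rw [ZMod.natCast_rightInverse _]
      ring
    exact (ZMod.natCast_eq_natCast_iff _ _ _).mpr (h1.mul_left' 4)
  have decomp : ∀ x : ZMod (2 * m0), ∃ i ε : ℕ, i < m0 ∧ ε ≤ 1 ∧
      x = ((2 * i + ε : ℕ) : ZMod (2 * m0)) := by
    intro x
    refine ⟨x.val / 2, x.val % 2, ?_, ?_, ?_⟩
    · have := x.val_lt; omega
    · omega
    · rw [show 2 * (x.val / 2) + x.val % 2 = x.val by omega]
      exact (ZMod.natCast_rightInverse x).symm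
  have hβ' : ∀ x : ZMod (2 * m0), ∃ c : ZMod (4 * n0), ∀ j, β (x, j) = (x, c - j) := by
    intro x
    obtain ⟨i, ε, hi, hε, rfl⟩ := decomp x
    exact ⟨_, fun j => hβ i ε hi hε j⟩
  have hββ : Function.Involutive β := by
    rintro ⟨x, j⟩
    obtain ⟨c, hc⟩ := hβ' x
    rw [hc, hc, sub_sub_cancel]
  -- normalize hypotheses
  push_cast at hadef hbdef hldef
  have key : ∀ p q, XbRel (2 * m0) (4 * n0) a b ℓ p q →
      XbRel (2 * m0) (4 * n0) a b ℓ (β p) (β q) := by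
    rintro ⟨x, pj⟩ ⟨y, qj⟩ (⟨h1, h2⟩ | ⟨i, j0, δ, hi, hj0, hδ, hp, hq⟩ |
      ⟨j0, δ, hj0, hδ, hp, hq⟩)
    · dsimp only at h1 h2
      subst h1
      obtain ⟨c, hc⟩ := hβ' x
      rw [hc, hc]
      left
      refine ⟨rfl, ?_⟩
      dsimp only
      rcases h2 with h | h
      · right; rw [h]; ring
      · left; rw [h]; ring
    · simp only [Prod.mk.injEq] at hp hq
      obtain ⟨rfl, rfl⟩ := hp
      obtain ⟨rfl, rfl⟩ := hq
      have hj0' : j0 < n0 := by omega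
      rcases Nat.even_or_odd i with ⟨i', rfl⟩ | ⟨i', rfl⟩
      · -- i = i' + i' even
        obtain ⟨j', hj', H4⟩ := master (i' * b0 + i' + j0) 0
        push_cast at H4
        rw [show (i' + i' + 1 : ℕ) = 2 * i' + 1 by omega,
          show (i' + i' : ℕ) = 2 * i' + 0 by omega,
          hβ i' 0 (by omega) (by omega), hβ i' 1 (by omega) (by omega)]
        right; left
        refine ⟨2 * i' + 0, j', 1 - δ, by omega, by omega, by omega, ?_, ?_⟩
        · refine Prod.ext rfl ?_
          dsimp only
          push_cast [Nat.cast_sub hδ]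
          linear_combination (-1 : ZMod (4 * n0)) * H4 - (i' : ZMod (4 * n0)) * hbdef
        · refine Prod.ext rfl ?_
          dsimp only
          push_cast [Nat.cast_sub hδ]
          linear_combination (-(b0 : ZMod (4 * n0))) * H4
            - ((j' : ZMod (4 * n0)) + j0 + i' + (i' : ZMod (4 * n0)) * b0) * hbdef
            + (i' : ZMod (4 * n0)) * hbb0
      · -- i = 2 * i' + 1 odd
        obtain ⟨j', hj', H4⟩ := master (i' * b0 + i' + j0 + 1) a0
        push_cast at H4
        rw [show (2 * i' + 1 + 1 : ℕ) = 2 * (i' + 1) + 0 by omega,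
          hβ i' 1 (by omega) (by omega), hβ (i' + 1) 0 (by omega) (by omega)]
        right; left
        refine ⟨2 * i' + 1, j', 1 - δ, by omega, by omega, by omega, ?_, ?_⟩
        · refine Prod.ext rfl ?_
          dsimp only
          push_cast [Nat.cast_sub hδ]
          linear_combination hadef - H4 - (i' : ZMod (4 * n0)) * hbdef
        · refine Prod.ext rfl ?_
          dsimp only
          push_cast [Nat.cast_sub hδ]
          linear_combination (-(b0 : ZMod (4 * n0))) * H4 - hba0
            - ((j' : ZMod (4 * n0)) + j0 + i' + 1 - a0 + (i' : ZMod (4 * n0)) * b0) * hbdef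
            + (i' : ZMod (4 * n0)) * hbb0
    · -- wrap-around edges
      simp only [Prod.mk.injEq] at hp hq
      obtain ⟨rfl, rfl⟩ := hp
      obtain ⟨rfl, rfl⟩ := hq
      have hj0' : j0 < n0 := by omega
      obtain ⟨j', hj', H4⟩ := master ((m0 - 1) * b0 + j0 + m0) a0
      push_cast [Nat.cast_sub (show 1 ≤ m0 by omega)] at H4
      rw [show (2 * m0 - 1 : ℕ) = 2 * (m0 - 1) + 1 by omega,
        show (0 : ZMod (2 * m0)) = ((2 * 0 + 0 : ℕ) : ZMod (2 * m0)) by norm_num,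
        hβ (m0 - 1) 1 (by omega) (by omega), hβ 0 0 (by omega) (by omega)]
      right; right
      refine ⟨j', 1 - δ, by omega, by omega, ?_, ?_⟩
      · refine Prod.ext ?_ ?_
        · dsimp only
          exact congrArg (fun t : ℕ => (t : ZMod (2 * m0))) (by omega)
        · dsimp only
          push_cast [Nat.cast_sub hδ, Nat.cast_sub (show 1 ≤ m0 by omega),
            Nat.cast_sub (show 1 ≤ 2 * m0 by omega), Nat.cast_sub (show 1 ≤ 2 * m0 - 1 by omega)]
          linear_combination hadef - H4 - ((m0 : ZMod (4 * n0)) - 1) * hbdef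
      · refine Prod.ext ?_ ?_
        · dsimp only
          norm_num
        · dsimp only
          push_cast [Nat.cast_sub hδ, Nat.cast_sub (show 1 ≤ m0 by omega)]
          linear_combination (-(b0 : ZMod (4 * n0))) * H4 - hba0 - hcond2
            - ((j' : ZMod (4 * n0)) + j0 + m0 - a0 + ((m0 : ZMod (4 * n0)) - 1) * b0) * hbdef
            + ((m0 : ZMod (4 * n0)) - 1) * hbb0
  refine ⟨hββ.bijective, ?_⟩
  have hfwd : ∀ p q, (Xb (2 * m0) (4 * n0) a b ℓ).Adj p q →
      (Xb (2 * m0) (4 * n0) a b ℓ).Adj (β p) (β q) := by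
    intro p q h
    rw [Xb, SimpleGraph.fromRel_adj] at h ⊢
    obtain ⟨hne, h⟩ := h
    exact ⟨fun e => hne (hββ.injective e), h.imp (key p q) (key q p)⟩
  intro p q
  constructor
  · intro h
    have h2 := hfwd _ _ h
    rwa [hββ p, hββ q] at h2
  · exact hfwd p q
end

section
/- Let X = X_b(m, n, a, b, ℓ) as in Construction 3.4 with n ≥ 12 and a ≢ 1 (mod n). Then the 10 vertices (2,3), (2,2), (1,2), (1,1), (1,0), (0,0), (0,1), (1,a), (1,a+1), (1,a+2) are pairwise distinct and form a cycle of length 10 in X (each consecutive pair is adjacent and (1, a+2) is adjacent to (2,3)). Consequently the girth of X is at most 10. -/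
namespace SimpleGraph

variable {V : Type*} {G : SimpleGraph V}

theorem exists_walk_support_eq_of_isChain :
    ∀ (v : V) (t : List V), (v :: t).IsChain G.Adj →
      ∃ p : G.Walk v ((v :: t).getLast (List.cons_ne_nil v t)), p.support = v :: t
  | _, [], _ => ⟨.nil, rfl⟩
  | v, x :: t, h => by
    obtain ⟨hvx, ht⟩ := List.isChain_cons_cons.mp h
    obtain ⟨p, hp⟩ := exists_walk_support_eq_of_isChain x t ht
    exact ⟨(Walk.cons hvx p).copy rfl (List.getLast_cons _).symm, by simp [hp]⟩

theorem girth_le_length_of_isChain {v : V} {t : List V} (hnodup : (v :: t).Nodup)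
    (hlen : 3 ≤ (v :: t).length) (hchain : (v :: t).IsChain G.Adj)
    (hclose : G.Adj ((v :: t).getLast (List.cons_ne_nil v t)) v) :
    G.girth ≤ (v :: t).length := by
  obtain ⟨p, hp⟩ := exists_walk_support_eq_of_isChain v t hchain
  have hcycle : (Walk.cons hclose p).IsCycle := by
    refine Walk.isCycle_iff_isPath_tail_and_le_length.mpr ⟨?_, ?_⟩
    · simpa [Walk.isPath_def, hp] using hnodup
    · simpa [← Walk.length_support, hp] using hlen
  simpa [← Walk.length_support, hp] using girth_le_length hcycle

end SimpleGraph

theorem ZMod.natCast_prod_injOn (m n : ℕ) :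
    Set.InjOn (fun p : ℕ × ℕ => ((p.1 : ZMod m), (p.2 : ZMod n))) {p | p.1 < m ∧ p.2 < n} := by
  rintro ⟨i, j⟩ ⟨hi, hj⟩ ⟨i', j'⟩ ⟨hi', hj'⟩ h
  simpa only [Prod.mk.injEq, ZMod.natCast_eq_natCast_iff', Nat.mod_eq_of_lt hi, Nat.mod_eq_of_lt hj,
    Nat.mod_eq_of_lt hi', Nat.mod_eq_of_lt hj'] using h

namespace Xb

variable {m n : ℕ} {a b ℓ : ZMod n}

theorem adj_add_one (hn : n ≠ 1) (i : ZMod m) (j : ZMod n) :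
    (Xb m n a b ℓ).Adj (i, j) (i, j + 1) := by
  refine (SimpleGraph.fromRel_adj _ _ _).mpr ⟨?_, .inl (.inl ⟨rfl, .inl rfl⟩)⟩
  simpa [ZMod.one_eq_zero_iff] using hn

theorem adj_link {i j0 δ : ℕ} (hi : i + 2 ≤ m) (hj0 : j0 < n / 4) (hδ : δ ≤ 1) :
    (Xb m n a b ℓ).Adj ((i : ZMod m), ((2 * i + 4 * j0 + δ : ℕ) : ZMod n))
      (((i + 1 : ℕ) : ZMod m), ((2 * i : ℕ) : ZMod n) + b * j0 + δ * a) := by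
  refine (SimpleGraph.fromRel_adj _ _ _).mpr
    ⟨fun h => ?_, .inl (.inr (.inl ⟨i, j0, δ, by omega, hj0, hδ, rfl, rfl⟩))⟩
  have := congrArg Prod.fst h
  simp only [ZMod.natCast_eq_natCast_iff', Nat.mod_eq_of_lt (show i < m by omega),
    Nat.mod_eq_of_lt (show i + 1 < m by omega)] at this
  omega

def tenCycle (m n : ℕ) (a : ZMod n) : List (ZMod m × ZMod n) :=
  [(2, 3), (2, 2), (1, 2), (1, 1), (1, 0), (0, 0), (0, 1), (1, a), (1, a + 1), (1, a + 2)]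

theorem isChain_tenCycle (hm : 3 ≤ m) (hn : 4 ≤ n) :
    (tenCycle m n a).IsChain (Xb m n a b ℓ).Adj := by
  have step := adj_add_one (m := m) (a := a) (b := b) (ℓ := ℓ) (by omega)
  have hj0 : 0 < n / 4 := by omega
  simp only [tenCycle, List.isChain_cons_cons, List.isChain_singleton, and_true]
  refine ⟨?_, ?_, ?_, ?_, ?_, ?_, ?_, step 1 a, ?_⟩
  · simpa [two_add_one_eq_three] using (step 2 2).symm
  · rw [SimpleGraph.adj_comm]
    simpa using adj_link (a := a) (b := b) (ℓ := ℓ) (i := 1) (δ := 0) (by omega) hj0 zero_le_one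
  · simpa [one_add_one_eq_two] using (step 1 1).symm
  · simpa using (step 1 0).symm
  · rw [SimpleGraph.adj_comm]
    simpa using adj_link (a := a) (b := b) (ℓ := ℓ) (i := 0) (δ := 0) (by omega) hj0 zero_le_one
  · simpa using step 0 0
  · simpa using adj_link (a := a) (b := b) (ℓ := ℓ) (i := 0) (δ := 1) (by omega) hj0 le_rfl
  · simpa [add_assoc, one_add_one_eq_two] using step 1 (a + 1)

theorem nodup_tenCycle {a0 : ℕ} (hm : 3 ≤ m) (ha0 : a0 ≠ 0) (ha0n : 4 * a0 + 3 < n)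
    (ha : a = ((4 * a0 + 1 : ℕ) : ZMod n)) : (tenCycle m n a).Nodup := by
  let cycle : List (ℕ × ℕ) := [(2, 3), (2, 2), (1, 2), (1, 1), (1, 0), (0, 0), (0, 1),
    (1, 4 * a0 + 1), (1, 4 * a0 + 2), (1, 4 * a0 + 3)]
  have hcast : tenCycle m n a = cycle.map fun p => ((p.1 : ZMod m), (p.2 : ZMod n)) := by
    norm_num [tenCycle, cycle, ha, add_assoc]
  have hbound : ∀ p ∈ cycle, p.1 < m ∧ p.2 < n := by
    simp only [cycle, List.mem_cons, List.not_mem_nil, or_false]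
    rintro p (rfl | rfl | rfl | rfl | rfl | rfl | rfl | rfl | rfl | rfl) <;> constructor <;>
      dsimp only <;> omega
  rw [hcast]
  refine List.Nodup.map_on
    (fun p hp q hq => ZMod.natCast_prod_injOn m n (hbound p hp) (hbound q hq)) ?_
  simpa [cycle] using ha0

theorem adj_link_a_add_two {a0 : ℕ} (hm : 3 ≤ m) (ha0 : a0 < n / 4)
    (ha : a = ((4 * a0 + 1 : ℕ) : ZMod n)) (hba0 : b * a0 + a = 1) :
    (Xb m n a b ℓ).Adj (1, a + 2) (2, 3) := by
  convert adj_link (a := a) (b := b) (ℓ := ℓ) (i := 1) (δ := 1) (by omega) ha0 le_rfl using 3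
  · simp
  · rw [ha]; push_cast; ring
  · norm_num
  · push_cast
    rw [one_mul, add_assoc, hba0]
    norm_num

end Xb

theorem stmt11_general (m n0 : ℕ) (hm : 3 ≤ m) (a0 : ℕ) (ha0 : a0 < n0)
    (a b ℓ : ZMod (4 * n0))
    (hadef : a = ((4 * a0 + 1 : ℕ) : ZMod (4 * n0)))
    (hba0 : b * (a0 : ZMod (4 * n0)) + a = 1)
    (hane1 : a ≠ 1) :
    ([((2 : ZMod m), (3 : ZMod (4 * n0))), (2, 2), (1, 2), (1, 1), (1, 0),
        (0, 0), (0, 1), (1, a), (1, a + 1), (1, a + 2)]).Pairwise (· ≠ ·) ∧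
    List.Chain' (Xb m (4 * n0) a b ℓ).Adj
      [((2 : ZMod m), (3 : ZMod (4 * n0))), (2, 2), (1, 2), (1, 1), (1, 0),
        (0, 0), (0, 1), (1, a), (1, a + 1), (1, a + 2)] ∧
    (Xb m (4 * n0) a b ℓ).Adj (1, a + 2) (2, 3) ∧
    (Xb m (4 * n0) a b ℓ).girth ≤ 10 := by
  have ha0_ne : a0 ≠ 0 := fun h => hane1 (by simpa [h] using hadef)
  have hnodup := Xb.nodup_tenCycle (m := m) hm ha0_ne (by omega) hadef
  have hchain := Xb.isChain_tenCycle (a := a) (b := b) (ℓ := ℓ) hm (by omega)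
  have hclose := Xb.adj_link_a_add_two (m := m) (ℓ := ℓ) hm (by omega) hadef hba0
  exact ⟨hnodup, hchain, hclose,
    SimpleGraph.girth_le_length_of_isChain hnodup (by simp) hchain hclose⟩

/-- if `n ≥ 12` and `a ≠ 1`, then the ten listed vertices are
pairwise distinct and form a 10-cycle in `X_b(m, n, a, b, ℓ)`; consequently the
girth of the graph is at most `10`. -/
theorem stmt11 (m n0 : ℕ) (hm : 3 ≤ m) (hn0 : 3 ≤ n0) (a0 b0 ℓ0 : ℕ)
    (hb0 : 1 ≤ b0) (hb0n : b0 < n0) (hgcd : Nat.gcd n0 b0 = 1) (ha0 : a0 < n0)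
    (a b ℓ : ZMod (4 * n0))
    (hadef : a = ((4 * a0 + 1 : ℕ) : ZMod (4 * n0)))
    (hbdef : b = ((4 * b0 : ℕ) : ZMod (4 * n0)))
    (hldef : ℓ = ((4 * ℓ0 + 2 : ℕ) : ZMod (4 * n0)))
    (hbb0 : b * (b0 : ZMod (4 * n0)) = 4)
    (hba0 : b * (a0 : ZMod (4 * n0)) + a = 1)
    (hane1 : a ≠ 1) :
    ([((2 : ZMod m), (3 : ZMod (4 * n0))), (2, 2), (1, 2), (1, 1), (1, 0),
        (0, 0), (0, 1), (1, a), (1, a + 1), (1, a + 2)]).Pairwise (· ≠ ·) ∧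
    List.Chain' (Xb m (4 * n0) a b ℓ).Adj
      [((2 : ZMod m), (3 : ZMod (4 * n0))), (2, 2), (1, 2), (1, 1), (1, 0),
        (0, 0), (0, 1), (1, a), (1, a + 1), (1, a + 2)] ∧
    (Xb m (4 * n0) a b ℓ).Adj (1, a + 2) (2, 3) ∧
    (Xb m (4 * n0) a b ℓ).girth ≤ 10 :=
  stmt11_general m n0 hm a0 ha0 a b ℓ hadef hba0 hane1
end

section
/- Let m = 2*m0 ≥ 4 be even and n > 4 be divisible by 4, and let ℓ = 4*ℓ0 + 3 be odd. Define a permutation α of Z_m × Z_n by: α(0, j) = (1, j) and α(1, j) = (0, j) for all j, and α(m − 2i + ε, 2(m − 2i + ε) + j) = (2i − ε + 1, ℓ + 4i + 2(ε − 1) − j) for all integers i and ε ∈ {0, 1} with 1 ≤ 2i − ε ≤ m − 2 and all j ∈ Z_n. Then α is not an involution; in fact α(α(m − 1, 2(m − 1))) = (m − 1, 2(m − 1) − 4) ≠ (m − 1, 2(m − 1)). -/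
/-- Case 2 of Section 4.2 of the paper: for `m = 2*m0 ≥ 4` even,
`n > 4` divisible by `4` and `ℓ = 4*ℓ0 + 3` odd, any permutation `α` of
`ZMod m × ZMod n` satisfying the defining equations of the would-be involution
`α` is not an involution: `α(α(m-1, 2(m-1))) = (m-1, 2(m-1) - 4) ≠ (m-1, 2(m-1))`. -/
theorem stmt12 (m0 n : ℕ) (hm0 : 2 ≤ m0) (hn4 : 4 ∣ n) (hn : 4 < n)
    (ℓ0 : ℕ) (ℓ : ZMod n) (hl : ℓ = ((4 * ℓ0 + 3 : ℕ) : ZMod n))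
    (m : ℕ) (hm : m = 2 * m0)
    (α : ZMod m × ZMod n → ZMod m × ZMod n)
    (hα0 : ∀ j : ZMod n, α ((0 : ZMod m), j) = (1, j))
    (hα1 : ∀ j : ZMod n, α ((1 : ZMod m), j) = (0, j))
    (hα2 : ∀ i ε : ℕ, ε ≤ 1 → 1 ≤ 2 * i - ε → 2 * i - ε ≤ m - 2 →
      ∀ j : ZMod n,
        α (((m - (2 * i - ε) : ℕ) : ZMod m),
            ((2 * (m - (2 * i - ε)) : ℕ) : ZMod n) + j) =
          (((2 * i - ε + 1 : ℕ) : ZMod m),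
            ℓ + 4 * (i : ZMod n) + 2 * ((ε : ZMod n) - 1) - j)) :
    α (α (((m - 1 : ℕ) : ZMod m), ((2 * (m - 1) : ℕ) : ZMod n))) =
        (((m - 1 : ℕ) : ZMod m), ((2 * (m - 1) : ℕ) : ZMod n) - 4) ∧
      (((m - 1 : ℕ) : ZMod m), ((2 * (m - 1) : ℕ) : ZMod n) - 4) ≠
        (((m - 1 : ℕ) : ZMod m), ((2 * (m - 1) : ℕ) : ZMod n)) := by
  constructor
  · have h1 := hα2 1 1 le_rfl (by omega) (by omega) 0
    have h2 := hα2 (m0 - 1) 0 (by omega) (by omega) (by omega) ℓ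
    have e1 : 2 * 1 - 1 = 1 := by norm_num
    have e2 : m - (2 * (m0 - 1) - 0) = 2 := by omega
    have e3 : 2 * (m0 - 1) - 0 + 1 = m - 1 := by omega
    rw [e1] at h1
    rw [e2, e3] at h2
    have hin : ((2 * (m - 1) : ℕ) : ZMod n) + 0 = ((2 * (m - 1) : ℕ) : ZMod n) := by ring
    rw [hin] at h1
    rw [h1]
    have hcoord : ℓ + 4 * ((1 : ℕ) : ZMod n) + 2 * (((1 : ℕ) : ZMod n) - 1) - 0
        = ((2 * 2 : ℕ) : ZMod n) + ℓ := by push_cast; ring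
    have hcoord2 : ((2 * 1 - 1 + 1 : ℕ) : ZMod m) = ((2 : ℕ) : ZMod m) := by norm_num
    rw [hcoord, hcoord2, h2]
    refine Prod.ext rfl ?_
    simp only
    have hc : ((m0 - 1 : ℕ) : ZMod n) = (m0 : ZMod n) - 1 := by
      push_cast [Nat.cast_sub (by omega : 1 ≤ m0)]; ring
    have hc2 : ((2 * (m - 1) : ℕ) : ZMod n) = 2 * ((2 : ZMod n) * m0) - 2 := by
      subst hm
      push_cast [Nat.cast_sub (by omega : 1 ≤ 2 * m0)]
      ring
    rw [hc, hc2]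
    push_cast
    ring
  · intro h
    have h2 := congrArg Prod.snd h
    simp only at h2
    have : (4 : ZMod n) = 0 := by
      have := sub_eq_self.mp h2
      exact this
    rw [show (4 : ZMod n) = ((4 : ℕ) : ZMod n) by push_cast; ring,
      ZMod.natCast_eq_zero_iff] at this
    exact absurd (Nat.le_of_dvd (by norm_num) this) (by omega)
end

section
/- Let m ≥ 3 be divisible by 3 and let X = X_b^1(m) be the graph on vertex set Z_m × Z_8 defined by: (i,j) ~ (i, j+1) for all i ∈ Z_m, j ∈ Z_8; (i, 2i + δ) ~ (i+1, 2i + 4δ) and (i, 2i + 4 + δ) ~ (i+1, 2i + 1 + 4δ) for 0 ≤ i ≤ m − 2 and δ ∈ {0,1}; and (m−1, 2(m−1) + δ) ~ (0, 6 + 4δ) and (m−1, 2(m−1) + 4 + δ) ~ (0, 7 + 4δ) for δ ∈ {0,1}. Then the spanning subgraph of X obtained by deleting all edges of the form (i, j)(i, j+1) with j even is a disjoint union of four cycles, each of length 2m. -/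
/-- The generating relation for the graph `X_b^1(m)` of Construction 5.2. -/
def Xb1Rel (m : ℕ) (p q : ZMod m × ZMod 8) : Prop :=
  (p.1 = q.1 ∧ q.2 = p.2 + 1) ∨
  (∃ i δ : ℕ, i ≤ m - 2 ∧ δ ≤ 1 ∧
    ((p = ((i : ZMod m), ((2 * i + δ : ℕ) : ZMod 8)) ∧
        q = (((i + 1 : ℕ) : ZMod m), ((2 * i + 4 * δ : ℕ) : ZMod 8))) ∨
     (p = ((i : ZMod m), ((2 * i + 4 + δ : ℕ) : ZMod 8)) ∧
        q = (((i + 1 : ℕ) : ZMod m), ((2 * i + 1 + 4 * δ : ℕ) : ZMod 8))))) ∨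
  (∃ δ : ℕ, δ ≤ 1 ∧
    ((p = (((m - 1 : ℕ) : ZMod m), ((2 * (m - 1) + δ : ℕ) : ZMod 8)) ∧
        q = ((0 : ZMod m), ((6 + 4 * δ : ℕ) : ZMod 8))) ∨
     (p = (((m - 1 : ℕ) : ZMod m), ((2 * (m - 1) + 4 + δ : ℕ) : ZMod 8)) ∧
        q = ((0 : ZMod m), ((7 + 4 * δ : ℕ) : ZMod 8)))))

/-- The graph `X_b^1(m)` of Construction 5.2. -/
def Xb1 (m : ℕ) : SimpleGraph (ZMod m × ZMod 8) :=
  SimpleGraph.fromRel (Xb1Rel m)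

/-- The spanning subgraph of `X_b^1(m)` obtained by deleting all cycle edges
`(i,j)(i,j+1)` with `j` even. -/
def Xb1del (m : ℕ) : SimpleGraph (ZMod m × ZMod 8) :=
  (Xb1 m).deleteEdges
    {e | ∃ (i : ZMod m) (j : ZMod 8), Even j ∧ e = s((i, j), (i, j + 1))}


namespace Stmt14Aux

abbrev Z8 := ZMod 8

def rp8 (o : Z8) : Z8 := if Even o.val then o - 1 else o + 1
def cr8 (o : Z8) : Z8 := if o = 0 then 6 else if o = 1 then 2 else if o = 4 then 7 else 3
def cri8 (o : Z8) : Z8 := if o = 6 then 0 else if o = 2 then 1 else if o = 7 then 4 else 5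
def gf (o : Z8) : Z8 := if o = 0 then 5 else if o = 5 then 4 else if o = 4 then 0 else o
def gi (o : Z8) : Z8 := if o = 5 then 0 else if o = 4 then 5 else if o = 0 then 4 else o
def src (o : Z8) : Prop := o.val % 4 < 2
instance : DecidablePred src := fun _ => Nat.decLt _ _
instance : DecidablePred (Even : Z8 → Prop) := fun j => decidable_of_iff (∃ r, j = r + r) Iff.rfl
def sg (o : Z8) : Z8 := if src o then o else rp8 o

-- pure Z8 facts, all by decide
lemma gi_gf : ∀ o, gi (gf o) = o := by decide
lemma gf_gi : ∀ o, gf (gi o) = o := by decide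
lemma gigi_eq_gf : ∀ o, gi (gi o) = gf o := by decide
lemma gigigi : ∀ o, gi (gi (gi o)) = o := by decide
lemma gf3 : ∀ o, gf (gf (gf o)) = o := by decide
lemma rp8_invol : ∀ o, rp8 (rp8 o) = o := by decide
lemma rp8_ne : ∀ o, rp8 o ≠ o := by decide
lemma rp8_shift : ∀ x o, rp8 (2*x + o) = 2*x + rp8 o := by decide
lemma src_cases : ∀ o, src o → o = 0 ∨ o = 1 ∨ o = 4 ∨ o = 5 := by decide
lemma src_cr8 : ∀ o, src o → ¬ src (cr8 o) := by decide
lemma src_cri8 : ∀ o, ¬ src o → src (cri8 o) := by decide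
lemma cri_cr : ∀ o, src o → cri8 (cr8 o) = o := by decide
lemma cr_cri : ∀ o, ¬ src o → cr8 (cri8 o) = o := by decide
lemma rp8_gf : ∀ o, src o → rp8 (gf o) = cr8 o := by decide
lemma cri8_eq_gi_rp8 : ∀ o, ¬ src o → cri8 o = gi (rp8 o) := by decide
lemma src_gf : ∀ o, src o → src (gf o) := by decide
lemma src_sg : ∀ o, src (sg o) := by decide
lemma src_gi : ∀ o, src o → src (gi o) := by decide
lemma sg_rp8 : ∀ o, sg (rp8 o) = sg o := by decide
lemma sg_of_src : ∀ o, src o → sg o = o := by decide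
lemma evenZ8 : ∀ j : Z8, Even j ↔ Even j.val := by decide
lemma ne_add_one : ∀ j : Z8, j ≠ j + 1 := by decide
lemma ne_add_two : ∀ j : Z8, j ≠ j + 1 + 1 := by decide
lemma rp8_even : ∀ j : Z8, Even j.val → rp8 j = j - 1 := by decide
lemma rp8_odd : ∀ j : Z8, ¬ Even j.val → rp8 j = j + 1 := by decide
lemma sub_one_odd : ∀ j : Z8, Even j.val → ¬ Even ((j - 1) : Z8) := by decide
lemma czero : ∀ x : Z8, 2*(x+1) + cr8 0 = 2*x + 0 := by decide
lemma cone : ∀ x : Z8, 2*(x+1) + cr8 1 = 2*x + 4 := by decide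
lemma cfour : ∀ x : Z8, 2*(x+1) + cr8 4 = 2*x + 1 := by decide
lemma cfive : ∀ x : Z8, 2*(x+1) + cr8 5 = 2*x + 5 := by decide

-- iterate lemmas
lemma gf_iter3 : gf^[3] = id := by funext o; show gf (gf (gf o)) = o; exact gf3 o
lemma gi_iter3 : gi^[3] = id := by funext o; show gi (gi (gi o)) = o; exact gigigi o

lemma iter_mod3 {f : Z8 → Z8} (hf : f^[3] = id) (k : ℕ) : f^[k] = f^[k % 3] := by
  conv_lhs => rw [← Nat.div_add_mod k 3]
  rw [Function.iterate_add, Function.iterate_mul, hf, Function.iterate_id]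
  rfl

lemma gf_iter_mod (k : ℕ) : gf^[k] = gf^[k % 3] := iter_mod3 gf_iter3 k
lemma gi_iter_mod (k : ℕ) : gi^[k] = gi^[k % 3] := iter_mod3 gi_iter3 k

lemma gf_gi_iter (k : ℕ) (o : Z8) : gf^[k] (gi^[k % 3] o) = o := by
  rw [gf_iter_mod]
  have h3 : k % 3 = 0 ∨ k % 3 = 1 ∨ k % 3 = 2 := by omega
  rcases h3 with h | h | h <;> rw [h] <;>
    simp [Function.iterate_succ_apply', gf3, gi_gf, gf_gi, gigi_eq_gf]
lemma gi_gf_iter (k : ℕ) (o : Z8) : gi^[k % 3] (gf^[k] o) = o := by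
  rw [gf_iter_mod]
  have h3 : k % 3 = 0 ∨ k % 3 = 1 ∨ k % 3 = 2 := by omega
  rcases h3 with h | h | h <;> rw [h] <;>
    simp [Function.iterate_succ_apply', gf3, gi_gf, gf_gi, gigi_eq_gf, gigigi]
lemma src_gf_iter (k : ℕ) (o : Z8) (h : src o) : src (gf^[k] o) := by
  induction k with
  | zero => exact h
  | succ n ih => rw [Function.iterate_succ_apply']; exact src_gf _ ih
lemma src_gi_iter (k : ℕ) (o : Z8) (h : src o) : src (gi^[k] o) := by
  induction k with
  | zero => exact h
  | succ n ih => rw [Function.iterate_succ_apply']; exact src_gi _ ih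



variable {m : ℕ}

/-- offset of a vertex -/
def ofs (v : ZMod m × Z8) : Z8 := v.2 - 2 * (v.1.val : Z8)

/-- rung neighbor -/
def rpv (v : ZMod m × Z8) : ZMod m × Z8 := (v.1, rp8 v.2)

/-- cross neighbor -/
def cnv (v : ZMod m × Z8) : ZMod m × Z8 :=
  if src (ofs v) then (v.1 + 1, 2 * (((v.1 + 1).val : ℕ) : Z8) + cr8 (ofs v))
  else (v.1 - 1, 2 * (((v.1 - 1).val : ℕ) : Z8) + cri8 (ofs v))

lemma vtx_eq (v : ZMod m × Z8) : v = (v.1, 2 * ((v.1.val : ℕ) : Z8) + ofs v) := by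
  simp [ofs]

lemma ofs_mk (i : ZMod m) (o : Z8) : ofs (i, 2 * ((i.val : ℕ) : Z8) + o) = o := by
  simp [ofs]

lemma rpv_invol (v : ZMod m × Z8) : rpv (rpv v) = v := by
  simp [rpv, rp8_invol]

lemma ofs_rpv (v : ZMod m × Z8) : ofs (rpv v) = rp8 (ofs v) := by
  have h := rp8_shift ((v.1.val : ℕ) : Z8) (ofs v)
  simp only [rpv, ofs] at *
  rw [show v.2 = 2 * ((v.1.val : ℕ) : Z8) + (v.2 - 2 * ((v.1.val : ℕ) : Z8)) by ring, h]
  ring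

lemma cnv_mk_src (i : ZMod m) (o : Z8) (h : src o) :
    cnv (i, 2 * ((i.val : ℕ) : Z8) + o) = (i + 1, 2 * (((i + 1).val : ℕ) : Z8) + cr8 o) := by
  rw [cnv, ofs_mk, if_pos h]

lemma cnv_mk_nsrc (i : ZMod m) (o : Z8) (h : ¬ src o) :
    cnv (i, 2 * ((i.val : ℕ) : Z8) + o) = (i - 1, 2 * (((i - 1).val : ℕ) : Z8) + cri8 o) := by
  rw [cnv, ofs_mk, if_neg h]

lemma cnv_invol (v : ZMod m × Z8) : cnv (cnv v) = v := by
  by_cases h : src (ofs v)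
  · conv_lhs => rw [vtx_eq v, cnv_mk_src _ _ h, cnv_mk_nsrc _ _ (src_cr8 _ h)]
    rw [add_sub_cancel_right, cri_cr _ h]
    exact (vtx_eq v).symm
  · conv_lhs => rw [vtx_eq v, cnv_mk_nsrc _ _ h, cnv_mk_src _ _ (src_cri8 _ h)]
    rw [sub_add_cancel, cr_cri _ h]
    exact (vtx_eq v).symm

section Vals
variable [NeZero m]

lemma val_add_one (i : ZMod m) :
    (i + 1).val = if i.val = m - 1 then 0 else i.val + 1 := by
  have hlt : i.val < m := ZMod.val_lt i
  have h1 : i + 1 = ((i.val + 1 : ℕ) : ZMod m) := by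
    push_cast [ZMod.natCast_zmod_val]; ring
  rw [h1, ZMod.val_natCast]
  by_cases h : i.val = m - 1
  · rw [if_pos h]; rw [h]
    have : m - 1 + 1 = m := by have := NeZero.pos m; omega
    rw [this, Nat.mod_self]
  · rw [if_neg h, Nat.mod_eq_of_lt (by omega)]

lemma val_sub_one (i : ZMod m) :
    (i - 1).val = if i.val = 0 then m - 1 else i.val - 1 := by
  have hlt : i.val < m := ZMod.val_lt i
  by_cases h : i.val = 0
  · rw [if_pos h]
    have hi : i = 0 := by
      have := ZMod.natCast_zmod_val i
      rw [h] at this; simpa using this.symm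
    have hm1 : ((m - 1 : ℕ) : ZMod m) = 0 - 1 := by
      have : ((m - 1 : ℕ) : ZMod m) + 1 = ((m - 1 + 1 : ℕ) : ZMod m) := by push_cast; ring
      have h2 : m - 1 + 1 = m := by have := NeZero.pos m; omega
      rw [h2, ZMod.natCast_self] at this
      linear_combination this
    rw [hi, ← hm1, ZMod.val_natCast, Nat.mod_eq_of_lt (by have := NeZero.pos m; omega)]
  · rw [if_neg h]
    have h1 : i = ((i.val - 1 : ℕ) : ZMod m) + 1 := by
      have h2 : ((i.val - 1 : ℕ) : ZMod m) + 1 = ((i.val - 1 + 1 : ℕ) : ZMod m) := by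
        push_cast; ring
      rw [h2, show i.val - 1 + 1 = i.val by omega, ZMod.natCast_zmod_val]
    conv_lhs => rw [h1, add_sub_cancel_right]
    rw [ZMod.val_natCast, Nat.mod_eq_of_lt (by omega)]

end Vals

section Adj
variable (hm : 3 ≤ m)
include hm

lemma one_ne_zero' : (1 : ZMod m) ≠ 0 := by
  intro h
  have : ((1 : ℕ) : ZMod m) = 0 := by exact_mod_cast h
  have h2 := (ZMod.natCast_eq_zero_iff 1 m).mp this
  have := Nat.le_of_dvd (by norm_num) h2
  omega

lemma add_one_ne (i : ZMod m) : i + 1 ≠ i := by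
  intro h
  exact one_ne_zero' hm (by linear_combination h)

lemma sub_one_ne (i : ZMod m) : i - 1 ≠ i := by
  intro h
  exact one_ne_zero' hm (by linear_combination -h)

omit hm in
lemma not_del_of_fst_ne {p q : ZMod m × Z8} (h : p.1 ≠ q.1) :
    s(p, q) ∉ {e | ∃ (i : ZMod m) (j : ZMod 8), Even j ∧ e = s((i, j), (i, j + 1))} := by
  rintro ⟨i, j, hj, he⟩
  rw [Sym2.eq_iff] at he
  rcases he with ⟨h1, h2⟩ | ⟨h1, h2⟩ <;>
    exact h (by rw [h1, h2])

omit hm in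
lemma rung_not_del (i : ZMod m) (j : Z8) (hj : ¬ Even j) :
    s(((i, j) : ZMod m × Z8), (i, j + 1)) ∉
      {e | ∃ (i : ZMod m) (j : ZMod 8), Even j ∧ e = s((i, j), (i, j + 1))} := by
  rintro ⟨i', j', hj', he⟩
  rw [Sym2.eq_iff] at he
  rcases he with ⟨h1, h2⟩ | ⟨h1, h2⟩
  · exact hj (by rw [show j = j' from congrArg Prod.snd h1]; exact hj')
  · have e1 : j = j' + 1 := congrArg Prod.snd h1
    have e2 : j + 1 = j' := congrArg Prod.snd h2
    exact ne_add_two j (by rw [← e2] at e1; exact e1)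

lemma adj_rung (i : ZMod m) (j : Z8) (hj : ¬ Even j) :
    (Xb1del m).Adj (i, j) (i, j + 1) := by
  rw [Xb1del, SimpleGraph.deleteEdges_adj]
  refine ⟨?_, rung_not_del i j hj⟩
  rw [Xb1, SimpleGraph.fromRel_adj]
  exact ⟨fun h => ne_add_one j (congrArg Prod.snd h), Or.inl (Or.inl ⟨rfl, rfl⟩)⟩

lemma adj_rpv (v : ZMod m × Z8) : (Xb1del m).Adj v (rpv v) := by
  by_cases h : Even v.2.val
  · have h1 : rpv v = (v.1, v.2 - 1) := by rw [rpv, rp8_even _ h]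
    have h2 := adj_rung hm v.1 (v.2 - 1) (sub_one_odd _ h)
    rw [sub_add_cancel] at h2
    rw [h1]
    exact h2.symm
  · have h1 : rpv v = (v.1, v.2 + 1) := by rw [rpv, rp8_odd _ h]
    rw [h1]
    exact adj_rung hm v.1 v.2 (fun hc => h ((evenZ8 v.2).mp hc))


omit hm in
lemma pair_eq2 {α β : Type*} (a c : α) (b d : β) (h1 : a = c) (h2 : b = d) :
    ((a, b) : α × β) = (c, d) := by rw [h1, h2]

lemma adj_cross [NeZero m] (i : ZMod m) (o : Z8) (ho : src o) :
    (Xb1del m).Adj (i, 2 * ((i.val : ℕ) : Z8) + o)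
      (i + 1, 2 * (((i + 1).val : ℕ) : Z8) + cr8 o) := by
  have hlt : i.val < m := ZMod.val_lt i
  have hfst : (i : ZMod m) ≠ i + 1 := fun h => add_one_ne hm i h.symm
  rw [Xb1del, SimpleGraph.deleteEdges_adj]
  refine ⟨?_, not_del_of_fst_ne hfst⟩
  rw [Xb1, SimpleGraph.fromRel_adj]
  refine ⟨fun h => hfst (congrArg Prod.fst h), Or.inl ?_⟩
  have hiv : ((i.val : ℕ) : ZMod m) = i := ZMod.natCast_zmod_val i
  by_cases htop : i.val = m - 1
  · have hi1 : i + 1 = 0 := by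
      rw [← hiv, htop]
      have h9 : ((m - 1 : ℕ) : ZMod m) + 1 = ((m - 1 + 1 : ℕ) : ZMod m) := by push_cast; ring
      rw [h9, show m - 1 + 1 = m by omega, ZMod.natCast_self]
    have hv1 : (i + 1).val = 0 := by rw [hi1, ZMod.val_zero]
    have hp1 : ((m - 1 : ℕ) : ZMod m) = i := by rw [← hiv, htop]
    rw [Xb1Rel]
    refine Or.inr (Or.inr ?_)
    rcases src_cases o ho with rfl | rfl | rfl | rfl
    · refine ⟨0, by norm_num, Or.inl ⟨?_, ?_⟩⟩
      · refine pair_eq2 _ _ _ _ hp1.symm ?_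
        rw [htop]; push_cast; ring
      · refine pair_eq2 _ _ _ _ hi1 ?_
        rw [hv1]; push_cast; decide
    · refine ⟨1, by norm_num, Or.inl ⟨?_, ?_⟩⟩
      · refine pair_eq2 _ _ _ _ hp1.symm ?_
        rw [htop]; push_cast; ring
      · refine pair_eq2 _ _ _ _ hi1 ?_
        rw [hv1]; push_cast; decide
    · refine ⟨0, by norm_num, Or.inr ⟨?_, ?_⟩⟩
      · refine pair_eq2 _ _ _ _ hp1.symm ?_
        rw [htop]; push_cast; ring
      · refine pair_eq2 _ _ _ _ hi1 ?_
        rw [hv1]; push_cast; decide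
    · refine ⟨1, by norm_num, Or.inr ⟨?_, ?_⟩⟩
      · refine pair_eq2 _ _ _ _ hp1.symm ?_
        rw [htop]; push_cast; ring
      · refine pair_eq2 _ _ _ _ hi1 ?_
        rw [hv1]; push_cast; decide
  · have hn2 : i.val ≤ m - 2 := by omega
    have hv1 : (i + 1).val = i.val + 1 := by rw [val_add_one, if_neg htop]
    have hq1 : ((i.val + 1 : ℕ) : ZMod m) = i + 1 := by push_cast [hiv]; ring
    rw [Xb1Rel]
    refine Or.inr (Or.inl ?_)
    rcases src_cases o ho with rfl | rfl | rfl | rfl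
    · refine ⟨i.val, 0, hn2, by norm_num, Or.inl ⟨?_, ?_⟩⟩
      · refine pair_eq2 _ _ _ _ hiv.symm ?_
        push_cast; ring
      · refine pair_eq2 _ _ _ _ hq1.symm ?_
        rw [hv1]; push_cast; linear_combination czero ((i.val : ℕ) : Z8)
    · refine ⟨i.val, 1, hn2, by norm_num, Or.inl ⟨?_, ?_⟩⟩
      · refine pair_eq2 _ _ _ _ hiv.symm ?_
        push_cast; ring
      · refine pair_eq2 _ _ _ _ hq1.symm ?_
        rw [hv1]; push_cast; linear_combination cone ((i.val : ℕ) : Z8)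
    · refine ⟨i.val, 0, hn2, by norm_num, Or.inr ⟨?_, ?_⟩⟩
      · refine pair_eq2 _ _ _ _ hiv.symm ?_
        push_cast; ring
      · refine pair_eq2 _ _ _ _ hq1.symm ?_
        rw [hv1]; push_cast; linear_combination cfour ((i.val : ℕ) : Z8)
    · refine ⟨i.val, 1, hn2, by norm_num, Or.inr ⟨?_, ?_⟩⟩
      · refine pair_eq2 _ _ _ _ hiv.symm ?_
        push_cast; ring
      · refine pair_eq2 _ _ _ _ hq1.symm ?_
        rw [hv1]; push_cast; linear_combination cfive ((i.val : ℕ) : Z8)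

lemma adj_cnv [NeZero m] (v : ZMod m × Z8) : (Xb1del m).Adj v (cnv v) := by
  by_cases h : src (ofs v)
  · have h1 : cnv v = (v.1 + 1, 2 * (((v.1 + 1).val : ℕ) : Z8) + cr8 (ofs v)) := by
      rw [cnv, if_pos h]
    rw [h1]
    conv_lhs => rw [vtx_eq v]
    exact adj_cross hm v.1 (ofs v) h
  · have h1 : cnv v = (v.1 - 1, 2 * (((v.1 - 1).val : ℕ) : Z8) + cri8 (ofs v)) := by
      rw [cnv, if_neg h]
    have h2 := adj_cross hm (v.1 - 1) (cri8 (ofs v)) (src_cri8 _ h)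
    rw [sub_add_cancel, cr_cri _ h] at h2
    rw [h1]
    refine SimpleGraph.Adj.symm ?_
    convert h2 using 2
    exact (congrArg Prod.snd (vtx_eq v))

lemma rel_imp [NeZero m] {p q : ZMod m × Z8} (hrel : Xb1Rel m p q)
    (hdel : s(p, q) ∉ {e | ∃ (i : ZMod m) (j : ZMod 8), Even j ∧ e = s((i, j), (i, j + 1))}) :
    q = rpv p ∨ q = cnv p := by
  rcases hrel with ⟨h1, h2⟩ | ⟨n, δ, hn, hδ, hor⟩ | ⟨δ, hδ, hor⟩
  · -- rung
    left
    have hq : q = (p.1, p.2 + 1) := by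
      rw [h1, ← h2]
    have hodd : ¬ Even p.2 := by
      intro he
      exact hdel ⟨p.1, p.2, he, by rw [hq]⟩
    have hr : rpv p = (p.1, p.2 + 1) := by
      rw [rpv, rp8_odd _ (fun hc => hodd ((evenZ8 p.2).mpr hc))]
    rw [hq, hr]
  · have hn1 : n + 1 < m := by omega
    interval_cases δ <;> rcases hor with ⟨hp, hq⟩ | ⟨hp, hq⟩ <;> subst hp hq
    · -- mid, o = 0
      right
      have hval : ((n : ZMod m)).val = n := ZMod.val_cast_of_lt (by omega)
      have hval1 : (((n : ZMod m)) + 1).val = n + 1 := by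
        rw [show ((n : ZMod m) + 1) = ((n + 1 : ℕ) : ZMod m) by push_cast; ring]
        exact ZMod.val_cast_of_lt (by omega)
      have hp2 : (((n : ℕ) : ZMod m), ((2 * n + 0 : ℕ) : Z8)) =
          ((n : ZMod m), 2 * ((((n : ZMod m)).val : ℕ) : Z8) + (0 : Z8)) := by
        refine pair_eq2 _ _ _ _ rfl ?_
        rw [hval]; push_cast; ring
      rw [hp2, cnv_mk_src _ _ (by decide)]
      refine pair_eq2 _ _ _ _ (by push_cast; ring) ?_
      rw [hval1]; push_cast; linear_combination -czero ((n : ℕ) : Z8)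
    · -- mid, o = 4
      right
      have hval : ((n : ZMod m)).val = n := ZMod.val_cast_of_lt (by omega)
      have hval1 : (((n : ZMod m)) + 1).val = n + 1 := by
        rw [show ((n : ZMod m) + 1) = ((n + 1 : ℕ) : ZMod m) by push_cast; ring]
        exact ZMod.val_cast_of_lt (by omega)
      have hp2 : (((n : ℕ) : ZMod m), ((2 * n + 4 + 0 : ℕ) : Z8)) =
          ((n : ZMod m), 2 * ((((n : ZMod m)).val : ℕ) : Z8) + (4 : Z8)) := by
        refine pair_eq2 _ _ _ _ rfl ?_
        rw [hval]; push_cast; ring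
      rw [hp2, cnv_mk_src _ _ (by decide)]
      refine pair_eq2 _ _ _ _ (by push_cast; ring) ?_
      rw [hval1]; push_cast; linear_combination -cfour ((n : ℕ) : Z8)
    · -- mid, o = 1
      right
      have hval : ((n : ZMod m)).val = n := ZMod.val_cast_of_lt (by omega)
      have hval1 : (((n : ZMod m)) + 1).val = n + 1 := by
        rw [show ((n : ZMod m) + 1) = ((n + 1 : ℕ) : ZMod m) by push_cast; ring]
        exact ZMod.val_cast_of_lt (by omega)
      have hp2 : (((n : ℕ) : ZMod m), ((2 * n + 1 : ℕ) : Z8)) =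
          ((n : ZMod m), 2 * ((((n : ZMod m)).val : ℕ) : Z8) + (1 : Z8)) := by
        refine pair_eq2 _ _ _ _ rfl ?_
        rw [hval]; push_cast; ring
      rw [hp2, cnv_mk_src _ _ (by decide)]
      refine pair_eq2 _ _ _ _ (by push_cast; ring) ?_
      rw [hval1]; push_cast; linear_combination -cone ((n : ℕ) : Z8)
    · -- mid, o = 5
      right
      have hval : ((n : ZMod m)).val = n := ZMod.val_cast_of_lt (by omega)
      have hval1 : (((n : ZMod m)) + 1).val = n + 1 := by
        rw [show ((n : ZMod m) + 1) = ((n + 1 : ℕ) : ZMod m) by push_cast; ring]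
        exact ZMod.val_cast_of_lt (by omega)
      have hp2 : (((n : ℕ) : ZMod m), ((2 * n + 4 + 1 : ℕ) : Z8)) =
          ((n : ZMod m), 2 * ((((n : ZMod m)).val : ℕ) : Z8) + (5 : Z8)) := by
        refine pair_eq2 _ _ _ _ rfl ?_
        rw [hval]; push_cast; ring
      rw [hp2, cnv_mk_src _ _ (by decide)]
      refine pair_eq2 _ _ _ _ (by push_cast; ring) ?_
      rw [hval1]; push_cast; linear_combination -cfive ((n : ℕ) : Z8)
  · interval_cases δ <;> rcases hor with ⟨hp, hq⟩ | ⟨hp, hq⟩ <;> subst hp hq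
    · -- wrap, o = 0
      right
      have hval : (((m - 1 : ℕ) : ZMod m)).val = m - 1 := ZMod.val_cast_of_lt (by omega)
      have hz : ((m - 1 : ℕ) : ZMod m) + 1 = 0 := by
        rw [show ((m - 1 : ℕ) : ZMod m) + 1 = ((m - 1 + 1 : ℕ) : ZMod m) by push_cast; ring,
          show m - 1 + 1 = m by omega, ZMod.natCast_self]
      have hval1 : ((((m - 1 : ℕ) : ZMod m)) + 1).val = 0 := by rw [hz, ZMod.val_zero]
      have hp2 : (((m - 1 : ℕ) : ZMod m), ((2 * (m - 1) + 0 : ℕ) : Z8)) =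
          (((m - 1 : ℕ) : ZMod m), 2 * (((((m - 1 : ℕ) : ZMod m)).val : ℕ) : Z8) + (0 : Z8)) := by
        refine pair_eq2 _ _ _ _ rfl ?_
        rw [hval]; push_cast; ring
      rw [hp2, cnv_mk_src _ _ (by decide)]
      refine pair_eq2 _ _ _ _ hz.symm ?_
      rw [hval1]; push_cast; decide
    · -- wrap, o = 4
      right
      have hval : (((m - 1 : ℕ) : ZMod m)).val = m - 1 := ZMod.val_cast_of_lt (by omega)
      have hz : ((m - 1 : ℕ) : ZMod m) + 1 = 0 := by
        rw [show ((m - 1 : ℕ) : ZMod m) + 1 = ((m - 1 + 1 : ℕ) : ZMod m) by push_cast; ring,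
          show m - 1 + 1 = m by omega, ZMod.natCast_self]
      have hval1 : ((((m - 1 : ℕ) : ZMod m)) + 1).val = 0 := by rw [hz, ZMod.val_zero]
      have hp2 : (((m - 1 : ℕ) : ZMod m), ((2 * (m - 1) + 4 + 0 : ℕ) : Z8)) =
          (((m - 1 : ℕ) : ZMod m), 2 * (((((m - 1 : ℕ) : ZMod m)).val : ℕ) : Z8) + (4 : Z8)) := by
        refine pair_eq2 _ _ _ _ rfl ?_
        rw [hval]; push_cast; ring
      rw [hp2, cnv_mk_src _ _ (by decide)]
      refine pair_eq2 _ _ _ _ hz.symm ?_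
      rw [hval1]; push_cast; decide
    · -- wrap, o = 1
      right
      have hval : (((m - 1 : ℕ) : ZMod m)).val = m - 1 := ZMod.val_cast_of_lt (by omega)
      have hz : ((m - 1 : ℕ) : ZMod m) + 1 = 0 := by
        rw [show ((m - 1 : ℕ) : ZMod m) + 1 = ((m - 1 + 1 : ℕ) : ZMod m) by push_cast; ring,
          show m - 1 + 1 = m by omega, ZMod.natCast_self]
      have hval1 : ((((m - 1 : ℕ) : ZMod m)) + 1).val = 0 := by rw [hz, ZMod.val_zero]
      have hp2 : (((m - 1 : ℕ) : ZMod m), ((2 * (m - 1) + 1 : ℕ) : Z8)) =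
          (((m - 1 : ℕ) : ZMod m), 2 * (((((m - 1 : ℕ) : ZMod m)).val : ℕ) : Z8) + (1 : Z8)) := by
        refine pair_eq2 _ _ _ _ rfl ?_
        rw [hval]; push_cast; ring
      rw [hp2, cnv_mk_src _ _ (by decide)]
      refine pair_eq2 _ _ _ _ hz.symm ?_
      rw [hval1]; push_cast; decide
    · -- wrap, o = 5
      right
      have hval : (((m - 1 : ℕ) : ZMod m)).val = m - 1 := ZMod.val_cast_of_lt (by omega)
      have hz : ((m - 1 : ℕ) : ZMod m) + 1 = 0 := by
        rw [show ((m - 1 : ℕ) : ZMod m) + 1 = ((m - 1 + 1 : ℕ) : ZMod m) by push_cast; ring,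
          show m - 1 + 1 = m by omega, ZMod.natCast_self]
      have hval1 : ((((m - 1 : ℕ) : ZMod m)) + 1).val = 0 := by rw [hz, ZMod.val_zero]
      have hp2 : (((m - 1 : ℕ) : ZMod m), ((2 * (m - 1) + 4 + 1 : ℕ) : Z8)) =
          (((m - 1 : ℕ) : ZMod m), 2 * (((((m - 1 : ℕ) : ZMod m)).val : ℕ) : Z8) + (5 : Z8)) := by
        refine pair_eq2 _ _ _ _ rfl ?_
        rw [hval]; push_cast; ring
      rw [hp2, cnv_mk_src _ _ (by decide)]
      refine pair_eq2 _ _ _ _ hz.symm ?_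
      rw [hval1]; push_cast; decide

lemma adj_imp [NeZero m] {p q : ZMod m × Z8} (h : (Xb1del m).Adj p q) :
    q = rpv p ∨ q = cnv p := by
  rw [Xb1del, SimpleGraph.deleteEdges_adj, Xb1, SimpleGraph.fromRel_adj] at h
  obtain ⟨⟨hne, hrel⟩, hdel⟩ := h
  rcases hrel with hrel | hrel
  · exact rel_imp hm hrel hdel
  · have hdel' : s(q, p) ∉
        {e | ∃ (i : ZMod m) (j : ZMod 8), Even j ∧ e = s((i, j), (i, j + 1))} := by
      rwa [Sym2.eq_swap]
    rcases rel_imp hm hrel hdel' with h1 | h1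
    · left; rw [h1, rpv_invol]
    · right; rw [h1, cnv_invol]

lemma neighborSet_eq [NeZero m] (v : ZMod m × Z8) :
    (Xb1del m).neighborSet v = {rpv v, cnv v} := by
  ext w
  constructor
  · exact fun h => adj_imp hm h
  · rintro (rfl | rfl)
    exacts [adj_rpv hm v, adj_cnv hm v]

lemma rpv_ne_cnv [NeZero m] (v : ZMod m × Z8) : rpv v ≠ cnv v := by
  intro h
  have h1 : (rpv v).1 = (cnv v).1 := congrArg Prod.fst h
  rw [rpv, cnv] at h1
  by_cases hs : src (ofs v)
  · rw [if_pos hs] at h1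
    exact add_one_ne hm v.1 h1.symm
  · rw [if_neg hs] at h1
    exact sub_one_ne hm v.1 h1.symm

lemma degree_two [NeZero m] (v : ZMod m × Z8) :
    ((Xb1del m).neighborSet v).ncard = 2 := by
  rw [neighborSet_eq hm v, Set.ncard_pair (rpv_ne_cnv hm v)]

omit hm in
lemma rp8_cr8 : ∀ o, src o → rp8 (cr8 o) = gf o := by decide
omit hm in
lemma sg_nsrc : ∀ o, ¬ src o → sg o = rp8 o := by decide

end Adj

section Lab
variable [NeZero m] (hm : 3 ≤ m) (hm3 : 3 ∣ m)

/-- component label -/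
def lab (v : ZMod m × Z8) : Z8 := gi^[v.1.val % 3] (sg (ofs v))

/-- parametrization of the component with label `c` -/
def Pm (c : Z8) (x : ZMod m × Bool) : ZMod m × Z8 :=
  (x.1, 2 * ((x.1.val : ℕ) : Z8) + (if x.2 then gf^[x.1.val] c else rp8 (gf^[x.1.val] c)))

lemma ofs_Pm (c : Z8) (x : ZMod m × Bool) :
    ofs (Pm c x) = (if x.2 then gf^[x.1.val] c else rp8 (gf^[x.1.val] c)) := ofs_mk _ _

lemma src_lab (v : ZMod m × Z8) : src (lab v) := src_gi_iter _ _ (src_sg _)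

lemma lab_Pm (c : Z8) (hc : src c) (x : ZMod m × Bool) : lab (Pm c x) = c := by
  rw [lab, ofs_Pm]
  have hfst : (Pm c x).1 = x.1 := rfl
  rw [hfst]
  cases hb : x.2
  · simp only [if_neg Bool.false_ne_true]
    rw [sg_rp8, sg_of_src _ (src_gf_iter _ _ hc)]
    exact gi_gf_iter _ _
  · simp only [if_pos]
    rw [sg_of_src _ (src_gf_iter _ _ hc)]
    exact gi_gf_iter _ _

lemma self_Pm (v : ZMod m × Z8) :
    Pm (lab v) (v.1, if src (ofs v) then true else false) = v := by
  rw [Pm, lab]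
  by_cases hs : src (ofs v)
  · rw [if_pos hs, if_pos rfl, sg_of_src _ hs, gf_gi_iter]
    exact (vtx_eq v).symm
  · rw [if_neg hs, if_neg Bool.false_ne_true, sg_nsrc _ hs, gf_gi_iter, rp8_invol]
    exact (vtx_eq v).symm

lemma lab_rpv (v : ZMod m × Z8) : lab (rpv v) = lab v := by
  rw [lab, lab, ofs_rpv, sg_rp8]
  rfl

lemma gi_succ_mod (k : ℕ) (x : Z8) : gi^[(k + 1) % 3] x = gi^[k % 3] (gi x) := by
  rw [← gi_iter_mod, Function.iterate_succ_apply, ← gi_iter_mod]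

include hm hm3

lemma lab_cnv (v : ZMod m × Z8) : lab (cnv v) = lab v := by
  by_cases hs : src (ofs v)
  · rw [show cnv v = (v.1 + 1, 2 * (((v.1 + 1).val : ℕ) : Z8) + cr8 (ofs v)) by
      rw [cnv, if_pos hs]]
    rw [lab, lab, ofs_mk]
    have h1 : sg (cr8 (ofs v)) = gf (sg (ofs v)) := by
      rw [sg_nsrc _ (src_cr8 _ hs), rp8_cr8 _ hs, sg_of_src _ hs]
    rw [h1]
    by_cases htop : v.1.val = m - 1
    · have hv1 : (v.1 + 1).val = 0 := by rw [val_add_one, if_pos htop]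
      have hm13 : (m - 1) % 3 = 2 := by omega
      rw [hv1, htop, hm13]
      simp only [Nat.zero_mod, Function.iterate_zero, id_eq]
      rw [show gi^[2] (sg (ofs v)) = gi (gi (sg (ofs v))) by
        rw [Function.iterate_succ_apply, Function.iterate_one], gigi_eq_gf]
    · have hv1 : (v.1 + 1).val = v.1.val + 1 := by rw [val_add_one, if_neg htop]
      rw [hv1, gi_succ_mod, gi_gf]
  · rw [show cnv v = (v.1 - 1, 2 * (((v.1 - 1).val : ℕ) : Z8) + cri8 (ofs v)) by
      rw [cnv, if_neg hs]]
    rw [lab, lab, ofs_mk]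
    have h1 : sg (cri8 (ofs v)) = gi (sg (ofs v)) := by
      rw [sg_of_src _ (src_cri8 _ hs), cri8_eq_gi_rp8 _ hs, sg_nsrc _ hs]
    rw [h1]
    by_cases hbot : v.1.val = 0
    · have hv1 : (v.1 - 1).val = m - 1 := by rw [val_sub_one, if_pos hbot]
      have hm13 : (m - 1) % 3 = 2 := by omega
      rw [hv1, hbot, hm13]
      simp only [Nat.zero_mod, Function.iterate_zero, id_eq]
      rw [show gi^[2] (gi (sg (ofs v))) = gi (gi (gi (sg (ofs v)))) by
        rw [Function.iterate_succ_apply, Function.iterate_one], gigigi]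
    · have hv1 : (v.1 - 1).val = v.1.val - 1 := by rw [val_sub_one, if_neg hbot]
      have hk : v.1.val = (v.1.val - 1) + 1 := by omega
      rw [hv1]
      conv_rhs => rw [hk, gi_succ_mod]

lemma lab_adj {v w : ZMod m × Z8} (h : (Xb1del m).Adj v w) : lab w = lab v := by
  rcases adj_imp hm h with rfl | rfl
  · exact lab_rpv _
  · exact lab_cnv hm hm3 _

lemma lab_reachable {v w : ZMod m × Z8} (h : (Xb1del m).Reachable v w) :
    lab v = lab w := by
  obtain ⟨p⟩ := h
  induction p with
  | nil => rfl
  | cons ha _ ih => rw [← ih, lab_adj hm hm3 ha]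

lemma gf_val_succ (i : ZMod m) (c : Z8) :
    gf^[(i + 1).val] c = gf (gf^[i.val] c) := by
  by_cases htop : i.val = m - 1
  · have hv1 : (i + 1).val = 0 := by rw [val_add_one, if_pos htop]
    have hm13 : (m - 1) % 3 = 2 := by omega
    rw [hv1]
    conv_rhs => rw [htop, gf_iter_mod (m - 1), hm13]
    simp only [Function.iterate_zero, id_eq]
    rw [show gf^[2] c = gf (gf c) by rw [Function.iterate_succ_apply, Function.iterate_one]]
    exact (gf3 c).symm
  · have hv1 : (i + 1).val = i.val + 1 := by rw [val_add_one, if_neg htop]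
    rw [hv1, Function.iterate_succ_apply']

omit hm3 in
lemma rpv_Pm (c : Z8) (x : ZMod m × Bool) : rpv (Pm c x) = Pm c (x.1, !x.2) := by
  obtain ⟨i, b⟩ := x
  rw [rpv, Pm, Pm]
  refine pair_eq2 _ _ _ _ rfl ?_
  rw [rp8_shift]
  cases b
  · simp only [Bool.not_false, if_neg Bool.false_ne_true, if_pos, rp8_invol]
  · simp only [Bool.not_true, if_pos, if_neg Bool.false_ne_true]

lemma adj_Pm_cross (c : Z8) (hc : src c) (i : ZMod m) :
    (Xb1del m).Adj (Pm c (i, true)) (Pm c (i + 1, false)) := by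
  have h1 : Pm c (i, true) = (i, 2 * ((i.val : ℕ) : Z8) + gf^[i.val] c) := by
    rw [Pm]; simp only [if_pos]
  have hsrc := src_gf_iter i.val c hc
  have h2 := adj_cross hm i (gf^[i.val] c) hsrc
  have h3 : Pm c (i + 1, false) =
      (i + 1, 2 * (((i + 1).val : ℕ) : Z8) + cr8 (gf^[i.val] c)) := by
    rw [Pm]; simp only [if_neg Bool.false_ne_true]
    refine pair_eq2 _ _ _ _ rfl ?_
    rw [gf_val_succ hm hm3, rp8_gf _ hsrc]
  rw [h1, h3]
  exact h2

lemma reach_Pm (c : Z8) (hc : src c) (x : ZMod m × Bool) :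
    (Xb1del m).Reachable (Pm c ((0 : ZMod m), true)) (Pm c x) := by
  obtain ⟨i, b⟩ := x
  have key : ∀ n : ℕ, n < m → (Xb1del m).Reachable
      (Pm c ((0 : ZMod m), true)) (Pm c ((n : ℕ), true)) := by
    intro n
    induction n with
    | zero => intro _; rw [Nat.cast_zero]
    | succ n ih =>
      intro hlt
      have h1 := ih (by omega)
      have h2 := (adj_Pm_cross hm hm3 c hc ((n : ℕ) : ZMod m)).reachable
      have h3 : (Xb1del m).Adj (Pm c (((n : ℕ) : ZMod m) + 1, false))
          (Pm c (((n : ℕ) : ZMod m) + 1, true)) := by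
        have := adj_rpv hm (Pm c (((n : ℕ) : ZMod m) + 1, false))
        rw [rpv_Pm hm] at this
        exact this
      have hcast : (((n + 1 : ℕ)) : ZMod m) = ((n : ℕ) : ZMod m) + 1 := by push_cast; ring
      rw [hcast]
      exact (h1.trans h2).trans h3.reachable
  have hi : ((i.val : ℕ) : ZMod m) = i := ZMod.natCast_zmod_val i
  have h0 := key i.val (ZMod.val_lt i)
  rw [hi] at h0
  cases b
  · have h3 : (Xb1del m).Adj (Pm c (i, true)) (Pm c (i, false)) := by
      have := adj_rpv hm (Pm c (i, true))
      rw [rpv_Pm hm] at this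
      exact this
    exact h0.trans h3.reachable
  · exact h0

omit hm hm3 in
lemma Pm_inj (c : Z8) : Function.Injective (Pm (m := m) c) := by
  rintro ⟨i, b⟩ ⟨i', b'⟩ h
  have h1 : i = i' := congrArg Prod.fst h
  subst h1
  have h2 := congrArg Prod.snd h
  simp only [Pm] at h2
  have h3 : (if b then gf^[i.val] c else rp8 (gf^[i.val] c)) =
      (if b' then gf^[i.val] c else rp8 (gf^[i.val] c)) := by
    exact add_left_cancel h2
  cases b <;> cases b' <;> simp only [reduceIte] at h3
  · rfl
  · exact (rp8_ne _ h3).elim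
  · exact (rp8_ne _ h3.symm).elim
  · rfl

lemma comp_eq_of_lab {v w : ZMod m × Z8} (h : lab v = lab w) :
    (Xb1del m).connectedComponentMk v = (Xb1del m).connectedComponentMk w := by
  have hv := reach_Pm hm hm3 (lab v) (src_lab v) (v.1, if src (ofs v) then true else false)
  rw [self_Pm] at hv
  have hw := reach_Pm hm hm3 (lab w) (src_lab w) (w.1, if src (ofs w) then true else false)
  rw [self_Pm] at hw
  rw [h] at hv
  exact SimpleGraph.ConnectedComponent.eq.mpr (hv.symm.trans hw)

def cix : Fin 4 → Z8 := ![0, 1, 4, 5]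
omit hm hm3 in
lemma src_cix : ∀ k, src (cix k) := by decide
def idxf : Z8 → Fin 4 := fun o => if o = 0 then 0 else if o = 1 then 1 else if o = 4 then 2 else 3
omit hm hm3 in
lemma cix_idxf : ∀ o, src o → cix (idxf o) = o := by decide
omit hm hm3 in
lemma idxf_cix : ∀ k, idxf (cix k) = k := by decide

def compEquiv : (Xb1del m).ConnectedComponent ≃ Fin 4 where
  toFun := SimpleGraph.ConnectedComponent.lift (fun v => idxf (lab v))
    (fun v w p _ => congrArg idxf (lab_reachable hm hm3 ⟨p⟩))
  invFun k := (Xb1del m).connectedComponentMk (Pm (cix k) ((0 : ZMod m), true))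
  left_inv := by
    refine SimpleGraph.ConnectedComponent.ind ?_
    intro v
    simp only [SimpleGraph.ConnectedComponent.lift_mk]
    rw [cix_idxf _ (src_lab v)]
    exact comp_eq_of_lab hm hm3 (lab_Pm _ (src_lab v) _)
  right_inv := by
    intro k
    simp only [SimpleGraph.ConnectedComponent.lift_mk]
    rw [lab_Pm _ (src_cix k), idxf_cix]

lemma card_components : Nat.card (Xb1del m).ConnectedComponent = 4 := by
  rw [Nat.card_congr (compEquiv hm hm3), Nat.card_eq_fintype_card, Fintype.card_fin]

lemma comp_card (c : (Xb1del m).ConnectedComponent) :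
    {v : ZMod m × ZMod 8 | (Xb1del m).connectedComponentMk v = c}.ncard = 2 * m := by
  obtain ⟨v, rfl⟩ := c.exists_rep
  have hset : {w : ZMod m × ZMod 8 | (Xb1del m).connectedComponentMk w =
      (Xb1del m).connectedComponentMk v} = Set.range (Pm (lab v)) := by
    ext w
    simp only [Set.mem_setOf_eq, Set.mem_range]
    constructor
    · intro h
      have hlab : lab w = lab v := lab_reachable hm hm3 (SimpleGraph.ConnectedComponent.eq.mp h)
      exact ⟨(w.1, if src (ofs w) then true else false), by rw [← hlab]; exact self_Pm w⟩
    · rintro ⟨x, rfl⟩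
      exact comp_eq_of_lab hm hm3 (lab_Pm _ (src_lab v) x)
  rw [show Quot.mk (Xb1del m).Reachable v = (Xb1del m).connectedComponentMk v from rfl,
    hset, ← Set.image_univ, Set.ncard_image_of_injective _ (Pm_inj (lab v)),
    Set.ncard_univ, Nat.card_prod, Nat.card_zmod, Nat.card_eq_fintype_card,
    Fintype.card_bool, mul_comm]

end Lab

end Stmt14Aux


/-- for `m ≥ 3` divisible by `3`, deleting from `X_b^1(m)` all edges
`(i,j)(i,j+1)` with `j` even leaves a `2`-regular graph with exactly four connected
components, each of cardinality `2*m` (i.e. a disjoint union of four `2m`-cycles). -/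
theorem stmt14 (m : ℕ) (hm3 : 3 ∣ m) (hm : 3 ≤ m) :
    (∀ v : ZMod m × ZMod 8, ((Xb1del m).neighborSet v).ncard = 2) ∧
    Nat.card (Xb1del m).ConnectedComponent = 4 ∧
    ∀ c : (Xb1del m).ConnectedComponent,
      {v : ZMod m × ZMod 8 | (Xb1del m).connectedComponentMk v = c}.ncard = 2 * m := by
  haveI : NeZero m := ⟨by omega⟩
  exact ⟨fun v => Stmt14Aux.degree_two hm v, Stmt14Aux.card_components hm hm3,
    fun c => Stmt14Aux.comp_card hm hm3 c⟩
end
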